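/- arXiv:2502.03551 — 7 statements merged into one kernel-verified Lean document; each statement's English description precedes it below -/
import Mathlib

section
/- Let θ ∈ (1/2, 1) and α ∈ (0, 1]. If f : Z → W satisfies ‖f(z)‖ ≤ σ for all z ∈ Z, then for every t ≥ 1, Σ_{i=1}^{t} (1/i^{2θ}) · (Π_{k=i+1}^{t} (1 − α/k^θ))² · ∫_Z ‖f(z)‖² dρ(z) ≤ σ² C_θ (1/α)^{θ/(1−θ)} (1/(t+1))^θ. -/
/-!
Write `P i = ∏_{i < k ≤ t} (1 - α / k^θ)`. The sum `∑ (α / i^θ) * P i` telescopes to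
`1 - P 0 ≤ 1`, so the indices `i ≥ t / 2`, where `1 / i^θ ≤ 8 / (t + 1)^θ`, contribute at most
`8 / α * (t + 1)^(-θ)`. For `i < t / 2`, comparing `∑_{i < k ≤ t} k^(-θ)` with `∫ x^(-θ)` gives
`(P i)^2 ≤ exp (-x)` with `x = α (2 - 2^θ) (t + 1)^(1 - θ) / (1 - θ)`, and `x^q e^(-x) ≤ (q / e)^q`
for `q = θ / (1 - θ)` turns this into the rate `(1 / α)^q (t + 1)^(-θ)`; the weights `1 / i^(2θ)`
sum to at most `2 / (2θ - 1)`. Finally `∫ ‖f‖² ≤ σ²`.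
-/

open MeasureTheory Finset Real

theorem Finset.sum_mul_prod_Ioc_one_sub {R : Type*} [CommRing R] (a : ℕ → R) (t : ℕ) :
    ∑ i ∈ Icc 1 t, a i * ∏ k ∈ Ioc i t, (1 - a k) = 1 - ∏ k ∈ Icc 1 t, (1 - a k) := by
  induction t with
  | zero => simp
  | succ t ih =>
    have hsucc : ∀ i ∈ Icc 1 t, a i * ∏ k ∈ Ioc i (t + 1), (1 - a k)
        = a i * (∏ k ∈ Ioc i t, (1 - a k)) * (1 - a (t + 1)) := fun i hi => by
      rw [prod_Ioc_succ_top (mem_Icc.mp hi).2, mul_assoc]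
    rw [sum_Icc_succ_top (by omega), sum_congr rfl hsucc, ← sum_mul, ih,
      prod_Icc_succ_top (by omega)]
    simp only [Ioc_self, prod_empty]
    ring

theorem Finset.sum_mul_prod_Ioc_one_sub_le_one (a : ℕ → ℝ) (t : ℕ)
    (ha : ∀ k ∈ Icc 1 t, a k ≤ 1) : ∑ i ∈ Icc 1 t, a i * ∏ k ∈ Ioc i t, (1 - a k) ≤ 1 := by
  rw [sum_mul_prod_Ioc_one_sub, sub_le_self_iff]
  exact prod_nonneg fun k hk => sub_nonneg.mpr (ha k hk)

theorem Finset.prod_one_sub_le_exp_neg_sum {ι : Type*} (s : Finset ι) (a : ι → ℝ)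
    (ha : ∀ k ∈ s, a k ≤ 1) : ∏ k ∈ s, (1 - a k) ≤ exp (-∑ k ∈ s, a k) := by
  rw [← sum_neg_distrib, exp_sum]
  exact prod_le_prod (fun k hk => sub_nonneg.mpr (ha k hk)) fun k _ => one_sub_le_exp_neg _

theorem Real.rpow_mul_exp_neg_le {q x : ℝ} (hq : 0 < q) (hx : 0 ≤ x) :
    x ^ q * exp (-x) ≤ (q / exp 1) ^ q := by
  calc x ^ q * exp (-x) = q ^ q * (x / q * exp (-(x / q))) ^ q := by
        rw [mul_rpow (by positivity) (exp_nonneg _), div_rpow hx hq.le, ← exp_mul,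
          neg_mul, div_mul_cancel₀ _ hq.ne']
        field_simp
    _ ≤ q ^ q * exp (-1) ^ q := by gcongr; exact mul_exp_neg_le_exp_neg_one _
    _ = (q / exp 1) ^ q := by
        rw [div_rpow hq.le (exp_nonneg _), exp_neg, inv_rpow (exp_nonneg _), div_eq_mul_inv]

theorem sub_rpow_div_le_sum_Ioc_one_div_rpow {θ : ℝ} (hθ0 : 0 ≤ θ) (hθ1 : θ < 1) {i t : ℕ}
    (hit : i ≤ t) :
    (((t : ℝ) + 1) ^ (1 - θ) - ((i : ℝ) + 1) ^ (1 - θ)) / (1 - θ) ≤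
      ∑ k ∈ Ioc i t, 1 / (k : ℝ) ^ θ := by
  have hanti : AntitoneOn (fun x : ℝ => x ^ (-θ)) (Set.Icc ((i + 1 : ℕ) : ℝ) ((t + 1 : ℕ) : ℝ)) :=
    (antitoneOn_rpow_Ioi_of_exponent_nonpos (by linarith)).mono fun x hx =>
      lt_of_lt_of_le (by positivity) hx.1
  have h := hanti.integral_le_sum_Ico (by omega)
  rw [integral_rpow (Or.inl (by linarith)), Ico_add_one_add_one_eq_Ioc] at h
  convert h using 1
  · push_cast; ring_nf
  · exact sum_congr rfl fun k _ => by rw [rpow_neg k.cast_nonneg, one_div]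

theorem sum_Icc_one_div_rpow_le {p : ℝ} (hp : 1 < p) (t : ℕ) :
    ∑ i ∈ Icc 1 t, 1 / (i : ℝ) ^ p ≤ p / (p - 1) := by
  rcases Nat.eq_zero_or_pos t with rfl | ht
  · simpa using div_nonneg (by linarith) (by linarith)
  have hanti : AntitoneOn (fun x : ℝ => x ^ (-p)) (Set.Icc ((1 : ℕ) : ℝ) (t : ℝ)) :=
    (antitoneOn_rpow_Ioi_of_exponent_nonpos (by linarith)).mono fun x hx =>
      lt_of_lt_of_le (by norm_num) hx.1
  have h0 : (0 : ℝ) ∉ Set.uIcc (1 : ℝ) t := by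
    rw [Set.uIcc_of_le (by exact_mod_cast ht)]; simp
  have htail := hanti.sum_le_integral_Ico ht
  rw [Nat.cast_one, integral_rpow (Or.inr ⟨by linarith, h0⟩),
    sum_Ico_add' (fun i : ℕ => (i : ℝ) ^ (-p)), Ico_add_one_add_one_eq_Ioc] at htail
  have ht_pow : 0 ≤ (t : ℝ) ^ (-p + 1) := by positivity
  generalize (t : ℝ) ^ (-p + 1) = T at ht_pow htail
  calc ∑ i ∈ Icc 1 t, 1 / (i : ℝ) ^ p = 1 + ∑ i ∈ Ioc 1 t, (i : ℝ) ^ (-p) := by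
        rw [← add_sum_Ioc_eq_sum_Icc ht]
        simp only [Nat.cast_one, one_rpow, div_one, one_div, rpow_neg (Nat.cast_nonneg _)]
    _ ≤ 1 + (T - 1 ^ (-p + 1)) / (-p + 1) := by gcongr
    _ ≤ p / (p - 1) := by
        rw [one_rpow, show -p + 1 = -(p - 1) by ring, div_neg, ← neg_div, neg_sub,
          one_add_div (by linarith), add_comm_sub]
        gcongr
        linarith

section StepSizeProducts

variable {θ α : ℝ}

theorem two_sub_two_rpow_pos (hθ : θ < 1) : 0 < 2 - (2 : ℝ) ^ θ := by
  linarith [rpow_lt_rpow_of_exponent_lt one_lt_two hθ, rpow_one (2 : ℝ)]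

theorem div_natCast_rpow_le_one (hθ : 0 ≤ θ) (hα : α ≤ 1) {k : ℕ} (hk : 1 ≤ k) :
    α / (k : ℝ) ^ θ ≤ 1 :=
  div_le_one_of_le₀ (hα.trans (one_le_rpow (by exact_mod_cast hk) hθ)) (by positivity)

theorem prod_Ioc_one_sub_div_rpow_nonneg (hθ : 0 ≤ θ) (hα : α ≤ 1) (i t : ℕ) :
    0 ≤ ∏ k ∈ Ioc i t, (1 - α / (k : ℝ) ^ θ) :=
  prod_nonneg fun _ hk =>
    sub_nonneg.mpr (div_natCast_rpow_le_one hθ hα (Nat.one_le_of_lt (mem_Ioc.mp hk).1))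

theorem prod_Ioc_one_sub_div_rpow_le_one (hθ : 0 ≤ θ) (hα0 : 0 ≤ α) (hα1 : α ≤ 1) (i t : ℕ) :
    ∏ k ∈ Ioc i t, (1 - α / (k : ℝ) ^ θ) ≤ 1 :=
  prod_le_one
    (fun _ hk =>
      sub_nonneg.mpr (div_natCast_rpow_le_one hθ hα1 (Nat.one_le_of_lt (mem_Ioc.mp hk).1)))
    fun _ _ => sub_le_self _ (by positivity)

theorem sq_prod_Ioc_one_sub_div_rpow_le_exp (hθ0 : 0 ≤ θ) (hθ1 : θ < 1) (hα0 : 0 ≤ α)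
    (hα : α ≤ 1) {i t : ℕ} (hit : 2 * i + 1 ≤ t) :
    (∏ k ∈ Ioc i t, (1 - α / (k : ℝ) ^ θ)) ^ 2 ≤
      exp (-(α * (2 - 2 ^ θ) / (1 - θ) * ((t : ℝ) + 1) ^ (1 - θ))) := by
  have hhalf : ((i : ℝ) + 1) ^ (1 - θ) ≤ 2 ^ θ / 2 * ((t : ℝ) + 1) ^ (1 - θ) := by
    have hit' : (i : ℝ) + 1 ≤ ((t : ℝ) + 1) / 2 := by
      have : (2 * i + 1 : ℝ) ≤ t := by exact_mod_cast hit
      linarith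
    calc ((i : ℝ) + 1) ^ (1 - θ) ≤ (((t : ℝ) + 1) / 2) ^ (1 - θ) := by gcongr
      _ = 2 ^ θ / 2 * ((t : ℝ) + 1) ^ (1 - θ) := by
        rw [div_rpow (by positivity) (by norm_num), rpow_sub two_pos, rpow_one]
        field_simp
  have hsum : α * (2 - 2 ^ θ) / (1 - θ) * ((t : ℝ) + 1) ^ (1 - θ) ≤
      2 * ∑ k ∈ Ioc i t, α / (k : ℝ) ^ θ := by
    have h := sub_rpow_div_le_sum_Ioc_one_div_rpow hθ0 hθ1 (i := i) (t := t) (by omega)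
    have hθ1' : 0 < 1 - θ := by linarith
    simp only [div_eq_mul_one_div α, ← mul_sum]
    calc α * (2 - 2 ^ θ) / (1 - θ) * ((t : ℝ) + 1) ^ (1 - θ)
        = 2 * α * ((((t : ℝ) + 1) ^ (1 - θ) - 2 ^ θ / 2 * ((t : ℝ) + 1) ^ (1 - θ)) / (1 - θ)) := by
          ring
      _ ≤ 2 * α * ((((t : ℝ) + 1) ^ (1 - θ) - ((i : ℝ) + 1) ^ (1 - θ)) / (1 - θ)) := by gcongr
      _ ≤ 2 * α * ∑ k ∈ Ioc i t, 1 / (k : ℝ) ^ θ := by gcongr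
      _ = 2 * (α * ∑ k ∈ Ioc i t, 1 / (k : ℝ) ^ θ) := by ring
  calc (∏ k ∈ Ioc i t, (1 - α / (k : ℝ) ^ θ)) ^ 2
      ≤ exp (-∑ k ∈ Ioc i t, α / (k : ℝ) ^ θ) ^ 2 := by
        gcongr
        · exact prod_Ioc_one_sub_div_rpow_nonneg hθ0 hα i t
        · exact prod_one_sub_le_exp_neg_sum _ _ fun k hk =>
            div_natCast_rpow_le_one hθ0 hα (Nat.one_le_of_lt (mem_Ioc.mp hk).1)
    _ = exp (-(2 * ∑ k ∈ Ioc i t, α / (k : ℝ) ^ θ)) := by rw [← exp_nat_mul]; ring_nf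
    _ ≤ _ := by gcongr

theorem sq_prod_Ioc_one_sub_div_rpow_le (hθ0 : 0 < θ) (hθ1 : θ < 1) (hα0 : 0 < α)
    (hα : α ≤ 1) {i t : ℕ} (hit : 2 * i + 1 ≤ t) :
    (∏ k ∈ Ioc i t, (1 - α / (k : ℝ) ^ θ)) ^ 2 ≤
      (θ / (exp 1 * (2 - 2 ^ θ))) ^ (θ / (1 - θ)) * (1 / α) ^ (θ / (1 - θ)) *
        (1 / ((t : ℝ) + 1)) ^ θ := by
  have h1θ : 0 < 1 - θ := by linarith
  have h2θ := two_sub_two_rpow_pos hθ1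
  set q := θ / (1 - θ) with hq_def
  set x := α * (2 - 2 ^ θ) / (1 - θ) * ((t : ℝ) + 1) ^ (1 - θ) with hx_def
  have hx : 0 < x := by positivity
  have hq : 0 < q := by positivity
  have hqx : q / exp 1 / x =
      θ / (exp 1 * (2 - 2 ^ θ)) * (1 / α) * (1 / ((t : ℝ) + 1)) ^ (1 - θ) := by
    rw [div_rpow zero_le_one (by positivity), one_rpow, hq_def, hx_def]
    field_simp
  calc (∏ k ∈ Ioc i t, (1 - α / (k : ℝ) ^ θ)) ^ 2 ≤ exp (-x) :=
        sq_prod_Ioc_one_sub_div_rpow_le_exp hθ0.le hθ1 hα0.le hα hit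
    _ ≤ (q / exp 1) ^ q / x ^ q := by
        rw [le_div_iff₀ (by positivity), mul_comm]
        exact rpow_mul_exp_neg_le hq hx.le
    _ = _ := by
        rw [← div_rpow (by positivity) hx.le, hqx, mul_rpow (by positivity) (by positivity),
          mul_rpow (by positivity) (by positivity), ← rpow_mul (by positivity)]
        congr 2
        rw [hq_def]
        field_simp

theorem one_div_rpow_mul_sq_prod_le (hθ0 : 0 ≤ θ) (hθ1 : θ ≤ 1) (hα0 : 0 < α)
    (hα : α ≤ 1) {i t : ℕ} (hi : 1 ≤ i) (hti : t ≤ 2 * i) :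
    1 / (i : ℝ) ^ (2 * θ) * (∏ k ∈ Ioc i t, (1 - α / (k : ℝ) ^ θ)) ^ 2 ≤
      8 / α * (1 / ((t : ℝ) + 1)) ^ θ *
        (α / (i : ℝ) ^ θ * ∏ k ∈ Ioc i t, (1 - α / (k : ℝ) ^ θ)) := by
  have hi0 : (0 : ℝ) < i := by exact_mod_cast hi
  have h8 : 1 / (i : ℝ) ^ θ ≤ 8 * (1 / ((t : ℝ) + 1)) ^ θ := by
    have ht8 : (t : ℝ) + 1 ≤ 8 * i := by
      have : (t : ℝ) ≤ 2 * i := by exact_mod_cast hti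
      have : (1 : ℝ) ≤ i := by exact_mod_cast hi
      linarith
    have : ((t : ℝ) + 1) ^ θ ≤ 8 * (i : ℝ) ^ θ :=
      calc ((t : ℝ) + 1) ^ θ ≤ (8 * i) ^ θ := by gcongr
        _ = 8 ^ θ * (i : ℝ) ^ θ := mul_rpow (by norm_num) hi0.le
        _ ≤ 8 * (i : ℝ) ^ θ := by gcongr; exact rpow_le_self_of_one_le (by norm_num) hθ1
    rw [div_rpow zero_le_one (by positivity), one_rpow, div_le_iff₀ (by positivity)]
    field_simp
    exact this
  set P := ∏ k ∈ Ioc i t, (1 - α / (k : ℝ) ^ θ)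
  have hP0 : 0 ≤ P := prod_Ioc_one_sub_div_rpow_nonneg hθ0 hα i t
  have hP1 : P ≤ 1 := prod_Ioc_one_sub_div_rpow_le_one hθ0 hα0.le hα i t
  calc 1 / (i : ℝ) ^ (2 * θ) * P ^ 2 = 1 / (i : ℝ) ^ θ * (1 / (i : ℝ) ^ θ * P) * P := by
        rw [two_mul, rpow_add hi0]; ring
    _ ≤ 8 * (1 / ((t : ℝ) + 1)) ^ θ * (1 / (i : ℝ) ^ θ * P) * 1 := by gcongr
    _ = 8 / α * (1 / ((t : ℝ) + 1)) ^ θ * (α / (i : ℝ) ^ θ * P) := by field_simp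

theorem one_div_rpow_mul_sq_prod_le_add (hθ0 : 0 < θ) (hθ1 : θ < 1) (hα0 : 0 < α)
    (hα : α ≤ 1) {i t : ℕ} (hi : 1 ≤ i) :
    1 / (i : ℝ) ^ (2 * θ) * (∏ k ∈ Ioc i t, (1 - α / (k : ℝ) ^ θ)) ^ 2 ≤
      8 / α * (1 / ((t : ℝ) + 1)) ^ θ * (α / (i : ℝ) ^ θ * ∏ k ∈ Ioc i t, (1 - α / (k : ℝ) ^ θ)) +
        (θ / (exp 1 * (2 - 2 ^ θ))) ^ (θ / (1 - θ)) * (1 / α) ^ (θ / (1 - θ)) *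
          (1 / ((t : ℝ) + 1)) ^ θ * (1 / (i : ℝ) ^ (2 * θ)) := by
  have hP0 := prod_Ioc_one_sub_div_rpow_nonneg hθ0.le hα i t
  have h2θ := two_sub_two_rpow_pos hθ1
  by_cases hit : 2 * i + 1 ≤ t
  · refine le_add_of_nonneg_of_le (by positivity [hP0]) ?_
    rw [mul_comm]
    gcongr
    exact sq_prod_Ioc_one_sub_div_rpow_le hθ0 hθ1 hα0 hα hit
  · refine le_add_of_le_of_nonneg ?_ (by positivity)
    exact one_div_rpow_mul_sq_prod_le hθ0.le hθ1.le hα0 hα hi (by omega)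

theorem sum_one_div_rpow_mul_sq_prod_le (hθ0 : 1 / 2 < θ) (hθ1 : θ < 1) (hα0 : 0 < α)
    (hα : α ≤ 1) (t : ℕ) :
    ∑ i ∈ Icc 1 t, 1 / (i : ℝ) ^ (2 * θ) * (∏ k ∈ Ioc i t, (1 - α / (k : ℝ) ^ θ)) ^ 2 ≤
      (8 + 2 / (2 * θ - 1) * (θ / (exp 1 * (2 - 2 ^ θ))) ^ (θ / (1 - θ))) *
        (1 / α) ^ (θ / (1 - θ)) * (1 / ((t : ℝ) + 1)) ^ θ := by
  have hq : 1 ≤ θ / (1 - θ) := by rw [le_div_iff₀ (by linarith)]; linarith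
  have hα_inv : 8 / α ≤ 8 * (1 / α) ^ (θ / (1 - θ)) := by
    rw [div_eq_mul_one_div]
    gcongr
    exact self_le_rpow_of_one_le (one_le_one_div hα0 hα) hq
  have htele := sum_mul_prod_Ioc_one_sub_le_one (fun k => α / (k : ℝ) ^ θ) t
    fun k hk => div_natCast_rpow_le_one (by linarith) hα (mem_Icc.mp hk).1
  have htele0 : 0 ≤ ∑ i ∈ Icc 1 t, α / (i : ℝ) ^ θ * ∏ k ∈ Ioc i t, (1 - α / (k : ℝ) ^ θ) :=
    sum_nonneg fun i _ =>
      mul_nonneg (by positivity) (prod_Ioc_one_sub_div_rpow_nonneg (by linarith) hα i t)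
  have hpseries : ∑ i ∈ Icc 1 t, 1 / (i : ℝ) ^ (2 * θ) ≤ 2 / (2 * θ - 1) :=
    (sum_Icc_one_div_rpow_le (by linarith) t).trans (by gcongr <;> linarith)
  have h2θ := two_sub_two_rpow_pos hθ1
  set T := (1 / ((t : ℝ) + 1)) ^ θ
  set B := (θ / (exp 1 * (2 - 2 ^ θ))) ^ (θ / (1 - θ)) * (1 / α) ^ (θ / (1 - θ)) * T
  calc _ ≤ ∑ i ∈ Icc 1 t, (8 / α * T *
          (α / (i : ℝ) ^ θ * ∏ k ∈ Ioc i t, (1 - α / (k : ℝ) ^ θ)) + B * (1 / (i : ℝ) ^ (2 * θ))) :=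
        sum_le_sum fun i hi =>
          one_div_rpow_mul_sq_prod_le_add (by linarith) hθ1 hα0 hα (mem_Icc.mp hi).1
    _ = 8 / α * T * ∑ i ∈ Icc 1 t, α / (i : ℝ) ^ θ * ∏ k ∈ Ioc i t, (1 - α / (k : ℝ) ^ θ) +
          B * ∑ i ∈ Icc 1 t, 1 / (i : ℝ) ^ (2 * θ) := by
        rw [sum_add_distrib, mul_sum, mul_sum]
    _ ≤ 8 * (1 / α) ^ (θ / (1 - θ)) * T * 1 + B * (2 / (2 * θ - 1)) := by gcongr
    _ = _ := by ring

end StepSizeProducts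

theorem diagonal_sum_bound_general
    {Z : Type*} [MeasurableSpace Z]
    {W : Type*} [NormedAddCommGroup W]
    (ρ : Measure Z) [IsProbabilityMeasure ρ]
    (f : Z → W)
    (σ : ℝ) (hf_bd : ∀ z, ‖f z‖ ≤ σ)
    (θ α : ℝ) (hθ : θ ∈ Set.Ioo (1/2 : ℝ) 1) (hα : α ∈ Set.Ioc (0 : ℝ) 1)
    (t : ℕ) :
    ∑ i ∈ Finset.Icc 1 t, (1 / (i : ℝ) ^ (2 * θ)) *
        (∏ k ∈ Finset.Ioc i t, (1 - α / (k : ℝ) ^ θ)) ^ 2 * (∫ z, ‖f z‖ ^ 2 ∂ρ) ≤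
      σ ^ 2 * (8 + 2 / (2 * θ - 1) * (θ / (Real.exp 1 * (2 - 2 ^ θ))) ^ (θ / (1 - θ))) *
        (1 / α) ^ (θ / (1 - θ)) * (1 / ((t : ℝ) + 1)) ^ θ := by
  have hI : ∫ z, ‖f z‖ ^ 2 ∂ρ ≤ σ ^ 2 := by
    have h := norm_integral_le_of_norm_le_const (μ := ρ) (f := fun z => ‖f z‖ ^ 2) (C := σ ^ 2)
      (ae_of_all _ fun z => by simpa using pow_le_pow_left₀ (norm_nonneg _) (hf_bd z) 2)
    simpa using (le_abs_self _).trans h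
  rw [← sum_mul]
  calc _ ≤ (∑ i ∈ Icc 1 t, 1 / (i : ℝ) ^ (2 * θ) * (∏ k ∈ Ioc i t, (1 - α / (k : ℝ) ^ θ)) ^ 2) *
        σ ^ 2 := by gcongr
    _ ≤ (8 + 2 / (2 * θ - 1) * (θ / (exp 1 * (2 - 2 ^ θ))) ^ (θ / (1 - θ))) *
        (1 / α) ^ (θ / (1 - θ)) * (1 / ((t : ℝ) + 1)) ^ θ * σ ^ 2 := by
        gcongr
        exact sum_one_div_rpow_mul_sq_prod_le hθ.1 hθ.2 hα.1 hα.2 t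
    _ = _ := by ring

theorem diagonal_sum_bound
    {Z : Type*} [MeasurableSpace Z]
    {W : Type*} [NormedAddCommGroup W] [InnerProductSpace ℝ W]
    (ρ : Measure Z) [IsProbabilityMeasure ρ]
    (f : Z → W) (hf_meas : StronglyMeasurable f)
    (σ : ℝ) (hf_bd : ∀ z, ‖f z‖ ≤ σ)
    (θ α : ℝ) (hθ : θ ∈ Set.Ioo (1/2 : ℝ) 1) (hα : α ∈ Set.Ioc (0 : ℝ) 1)
    (t : ℕ) (ht : 1 ≤ t) :
    ∑ i ∈ Finset.Icc 1 t, (1 / (i : ℝ) ^ (2 * θ)) *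
        (∏ k ∈ Finset.Ioc i t, (1 - α / (k : ℝ) ^ θ)) ^ 2 * (∫ z, ‖f z‖ ^ 2 ∂ρ) ≤
      σ ^ 2 * (8 + 2 / (2 * θ - 1) * (θ / (Real.exp 1 * (2 - 2 ^ θ))) ^ (θ / (1 - θ))) *
        (1 / α) ^ (θ / (1 - θ)) * (1 / ((t : ℝ) + 1)) ^ θ :=
  diagonal_sum_bound_general ρ f σ hf_bd θ α hθ hα t
end

section
/- For every m ≥ 1, the decorrelation bound |∫_Z ∫_Z ⟨f(z), f(z')⟩ P^{m}(z, dz') dρ(z)| ≤ 2σ²·φ_m holds, where φ_m is the φ-mixing coefficient of the stationary Markov chain. -/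
open MeasureTheory ProbabilityTheory
open scoped ENNReal RealInnerProductSpace

/-- The `m`-step transition kernel obtained by iterating `P`. -/
noncomputable def kernelIter {Z : Type*} [MeasurableSpace Z] (P : Kernel Z Z) : ℕ → Kernel Z Z
  | 0 => Kernel.id
  | m + 1 => (kernelIter P m).comp P

/-- The φ-mixing coefficient of the stationary Markov chain with kernel `P` and
invariant distribution `ρ`. -/
noncomputable def phiCoef {Z : Type*} [MeasurableSpace Z] (P : Kernel Z Z) (ρ : Measure Z)
    (m : ℕ) : ℝ :=
  essSup (fun z => ⨆ B : {B : Set Z // MeasurableSet B},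
    |(kernelIter P m z B.1).toReal - (ρ B.1).toReal|) ρ

/-!
Because `f` is centred under `ρ`, the inner integral equals `∫ ⟪f z, f z'⟫ d(P^m(z, ·) - ρ)(z')`.
On either piece of a Hahn decomposition of `P^m(z, ·) - ρ` this signed measure has mass at most
`φ_m` for `ρ`-a.e. `z`, and the integrand is bounded by `σ²`; so the inner integral is at most
`2σ²φ_m` in absolute value.
-/

section IntegralDifference

variable {X E : Type*} [MeasurableSpace X] [NormedAddCommGroup E] [NormedSpace ℝ E]
  {μ ν : Measure X} {h : X → E} {C : ℝ}

theorem norm_integral_sub_integral_le_of_le [IsFiniteMeasure ν] (hμν : μ ≤ ν)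
    (hmeas : StronglyMeasurable h) (hb : ∀ x, ‖h x‖ ≤ C) :
    ‖∫ x, h x ∂ν - ∫ x, h x ∂μ‖ ≤ C * (ν.real Set.univ - μ.real Set.univ) := by
  have : IsFiniteMeasure μ := isFiniteMeasure_of_le ν hμν
  have hint (κ : Measure X) [IsFiniteMeasure κ] : Integrable h κ :=
    .of_bound hmeas.aestronglyMeasurable C (ae_of_all _ hb)
  have hsplit : ∫ x, h x ∂ν = ∫ x, h x ∂(ν - μ) + ∫ x, h x ∂μ := by
    rw [← integral_add_measure (hint _) (hint _), Measure.sub_add_cancel_of_le hμν]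
  calc ‖∫ x, h x ∂ν - ∫ x, h x ∂μ‖ = ‖∫ x, h x ∂(ν - μ)‖ := by rw [hsplit, add_sub_cancel_right]
    _ ≤ C * (ν - μ).real Set.univ := norm_integral_le_of_norm_le_const (ae_of_all _ hb)
    _ = C * (ν.real Set.univ - μ.real Set.univ) := by
      rw [measureReal_def, Measure.sub_apply MeasurableSet.univ hμν,
        ENNReal.toReal_sub_of_le (hμν Set.univ) (measure_ne_top _ _)]
      rfl

theorem norm_integral_sub_integral_le [IsFiniteMeasure μ] [IsFiniteMeasure ν]
    (hmeas : StronglyMeasurable h) (hC : 0 ≤ C) (hb : ∀ x, ‖h x‖ ≤ C) {D : ℝ}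
    (hD : ∀ s, MeasurableSet s → |(μ s).toReal - (ν s).toReal| ≤ D) :
    ‖∫ x, h x ∂μ - ∫ x, h x ∂ν‖ ≤ 2 * C * D := by
  obtain ⟨s, hs⟩ := exists_isHahnDecomposition μ ν
  have hint (κ : Measure X) [IsFiniteMeasure κ] : Integrable h κ :=
    .of_bound hmeas.aestronglyMeasurable C (ae_of_all _ hb)
  have hon : ‖∫ x in s, h x ∂ν - ∫ x in s, h x ∂μ‖ ≤ C * D := by
    refine (norm_integral_sub_integral_le_of_le hs.le_on hmeas hb).trans
      (mul_le_mul_of_nonneg_left ?_ hC)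
    rw [measureReal_restrict_apply_univ, measureReal_restrict_apply_univ]
    exact (le_abs_self _).trans ((abs_sub_comm _ _).trans_le (hD s hs.measurableSet))
  have hoff : ‖∫ x in sᶜ, h x ∂μ - ∫ x in sᶜ, h x ∂ν‖ ≤ C * D := by
    refine (norm_integral_sub_integral_le_of_le hs.ge_on_compl hmeas hb).trans
      (mul_le_mul_of_nonneg_left ?_ hC)
    rw [measureReal_restrict_apply_univ, measureReal_restrict_apply_univ]
    exact (le_abs_self _).trans (hD _ hs.measurableSet.compl)
  calc ‖∫ x, h x ∂μ - ∫ x, h x ∂ν‖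
        = ‖(∫ x in sᶜ, h x ∂μ - ∫ x in sᶜ, h x ∂ν) - (∫ x in s, h x ∂ν - ∫ x in s, h x ∂μ)‖ := by
          rw [← integral_add_compl hs.measurableSet (hint μ),
            ← integral_add_compl hs.measurableSet (hint ν)]
          congr 1
          abel
    _ ≤ C * D + C * D := norm_sub_le_of_le hoff hon
    _ = 2 * C * D := by ring

end IntegralDifference

section PhiMixing

variable {Z : Type*} [MeasurableSpace Z]

instance isMarkovKernel_kernelIter (P : Kernel Z Z) [IsMarkovKernel P] (m : ℕ) :
    IsMarkovKernel (kernelIter P m) := by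
  induction m with
  | zero => rw [kernelIter]; infer_instance
  | succ m ih => rw [kernelIter]; infer_instance

theorem abs_toReal_sub_toReal_le_one (μ ν : Measure Z) [IsProbabilityMeasure μ]
    [IsProbabilityMeasure ν] (s : Set Z) : |(μ s).toReal - (ν s).toReal| ≤ 1 :=
  abs_sub_le_of_nonneg_of_le measureReal_nonneg measureReal_le_one
    measureReal_nonneg measureReal_le_one

theorem ae_abs_kernelIter_sub_le_phiCoef (P : Kernel Z Z) [IsMarkovKernel P] (ρ : Measure Z)
    [IsProbabilityMeasure ρ] (m : ℕ) :
    ∀ᵐ z ∂ρ, ∀ s, MeasurableSet s →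
      |(kernelIter P m z s).toReal - (ρ s).toReal| ≤ phiCoef P ρ m := by
  set φ : Z → ℝ := fun z => ⨆ B : {B : Set Z // MeasurableSet B},
    |(kernelIter P m z B.1).toReal - (ρ B.1).toReal|
  have hbdd (z : Z) : BddAbove (Set.range fun B : {B : Set Z // MeasurableSet B} =>
      |(kernelIter P m z B.1).toReal - (ρ B.1).toReal|) :=
    ⟨1, by rintro _ ⟨B, rfl⟩; exact abs_toReal_sub_toReal_le_one _ _ _⟩
  have hφ : Filter.IsBoundedUnder (· ≤ ·) (ae ρ) φ :=
    ⟨1, ae_of_all _ fun z => ciSup_le fun B => abs_toReal_sub_toReal_le_one _ _ _⟩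
  filter_upwards [ae_le_essSup hφ] with z hz s hs
  exact (le_ciSup (hbdd z) ⟨s, hs⟩).trans hz

end PhiMixing

theorem decorrelation_phi_mixing_general
    {Z : Type*} [MeasurableSpace Z]
    {W : Type*} [NormedAddCommGroup W] [InnerProductSpace ℝ W] [CompleteSpace W]
    (P : Kernel Z Z) [IsMarkovKernel P]
    (ρ : Measure Z) [IsProbabilityMeasure ρ]
    (f : Z → W) (hf_meas : StronglyMeasurable f)
    (hf_mean : ∫ z, f z ∂ρ = 0)
    (σ : ℝ) (hf_bd : ∀ z, ‖f z‖ ≤ σ)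
    (m : ℕ) :
    |∫ z, ∫ z', ⟪f z, f z'⟫ ∂(kernelIter P m z) ∂ρ| ≤ 2 * σ ^ 2 * phiCoef P ρ m := by
  have hf_int : Integrable f ρ := .of_bound hf_meas.aestronglyMeasurable σ (ae_of_all _ hf_bd)
  have hpointwise : ∀ᵐ z ∂ρ,
      ‖∫ z', ⟪f z, f z'⟫ ∂(kernelIter P m z)‖ ≤ 2 * σ ^ 2 * phiCoef P ρ m := by
    filter_upwards [ae_abs_kernelIter_sub_le_phiCoef P ρ m] with z hz
    have hcentred : ∫ z', ⟪f z, f z'⟫ ∂ρ = 0 := by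
      rw [integral_inner hf_int, hf_mean, inner_zero_right]
    have hbd (z' : Z) : ‖⟪f z, f z'⟫‖ ≤ σ ^ 2 := by
      rw [sq]
      exact (norm_inner_le_norm _ _).trans (mul_le_mul (hf_bd z) (hf_bd z') (norm_nonneg _)
        ((norm_nonneg _).trans (hf_bd z)))
    rw [← sub_zero (∫ z', _ ∂_), ← hcentred]
    exact norm_integral_sub_integral_le (stronglyMeasurable_const.inner hf_meas) (sq_nonneg σ)
      hbd hz
  simpa using norm_integral_le_of_norm_le (integrable_const _) hpointwise

theorem decorrelation_phi_mixing
    {Z : Type*} [MeasurableSpace Z]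
    {W : Type*} [NormedAddCommGroup W] [InnerProductSpace ℝ W] [CompleteSpace W]
    (P : Kernel Z Z) [IsMarkovKernel P]
    (ρ : Measure Z) [IsProbabilityMeasure ρ]
    (hinv : ρ.bind (fun z => P z) = ρ)
    (f : Z → W) (hf_meas : StronglyMeasurable f) (hf_int : Integrable f ρ)
    (hf_mean : ∫ z, f z ∂ρ = 0)
    (σ : ℝ) (hσ : 0 ≤ σ) (hf_bd : ∀ z, ‖f z‖ ≤ σ)
    (m : ℕ) (hm : 1 ≤ m) :
    |∫ z, ∫ z', ⟪f z, f z'⟫ ∂(kernelIter P m z) ∂ρ| ≤ 2 * σ ^ 2 * phiCoef P ρ m :=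
  decorrelation_phi_mixing_general P ρ f hf_meas hf_mean σ hf_bd m
end

section
/- Let θ ∈ (1/2, 1), α ∈ (0, 1], and let (φ_m)_{m ≥ 1} be any sequence of nonnegative real numbers. Then for every t ≥ 1, Σ_{1 ≤ i < j ≤ t} (1/i^θ)(1/j^θ) · Π_{k=i+1}^{t}(1 − α/k^θ) · Π_{l=j+1}^{t}(1 − α/l^θ) · φ_{j−i} ≤ C_θ · (1/α)^{θ/(1−θ)} · (1/(t+1))^θ · Σ_{i=1}^{t} φ_i. -/
open Finset Real

private lemma telescope_Ioc (f : ℕ → ℝ) : ∀ t j : ℕ, j ≤ t →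
    ∑ k ∈ Finset.Ioc j t, (f (k+1) - f k) = f (t+1) - f (j+1) := by
  intro t
  induction t with
  | zero => intro j hj; interval_cases j; simp
  | succ n ih =>
    intro j hj
    rcases Nat.lt_or_ge j (n+1) with h | h
    · have hjn : j ≤ n := Nat.lt_succ_iff.mp h
      rw [Finset.sum_Ioc_succ_top hjn, ih j hjn]; ring
    · have : j = n + 1 := le_antisymm hj h
      subst this; simp

private lemma rpow_succ_sub_le (x r : ℝ) (hx : 1 ≤ x) (hr0 : 0 ≤ r) (hr1 : r ≤ 1) :
    (x+1)^r - x^r ≤ r * x^(r-1) := by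
  have hx0 : (0:ℝ) < x := lt_of_lt_of_le one_pos hx
  have hb : ((1:ℝ) + 1/x)^r ≤ 1 + r * (1/x) :=
    rpow_one_add_le_one_add_mul_self (by have := one_div_pos.mpr hx0; linarith) hr0 hr1
  have hsplit : (x+1)^r = x^r * (1 + 1/x)^r := by
    rw [← Real.mul_rpow hx0.le (by positivity)]
    congr 1
    field_simp
  have h1 : (x+1)^r ≤ x^r * (1 + r * (1/x)) := by
    rw [hsplit]
    exact mul_le_mul_of_nonneg_left hb (Real.rpow_nonneg hx0.le r)
  have h2 : x^r * (r * (1/x)) = r * x^(r-1) := by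
    rw [Real.rpow_sub hx0, Real.rpow_one]; ring
  nlinarith [Real.rpow_nonneg hx0.le r]

private lemma exp_neg_le_rpow (p x : ℝ) (hp : 0 < p) (hx : 0 < x) :
    Real.exp (-x) ≤ (p / (Real.exp 1 * x)) ^ p := by
  have hpx : 0 < p / (Real.exp 1 * x) := by positivity
  rw [← Real.exp_log (Real.rpow_pos_of_pos hpx p), Real.log_rpow hpx]
  apply Real.exp_le_exp.mpr
  have hlog : Real.log (x / p) ≤ x / p - 1 := Real.log_le_sub_one_of_pos (by positivity)
  have hld : Real.log (x / p) = Real.log x - Real.log p := Real.log_div (ne_of_gt hx) (ne_of_gt hp)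
  have hl2 : Real.log (p / (Real.exp 1 * x)) = Real.log p - 1 - Real.log x := by
    rw [Real.log_div (ne_of_gt hp) (by positivity), Real.log_mul (Real.exp_ne_zero 1) (ne_of_gt hx),
      Real.log_exp]
    ring
  rw [hl2]
  have := mul_le_mul_of_nonneg_left hlog hp.le
  rw [hld] at this
  have hxp : p * (x/p - 1) = x - p := by field_simp
  nlinarith [this]

private lemma sum_inv_rpow_lower (θ : ℝ) (hθ0 : 0 < θ) (hθ1 : θ < 1) (j t : ℕ) (hj : j ≤ t) :
    (((t:ℝ)+1)^(1-θ) - ((j:ℝ)+1)^(1-θ)) / (1-θ) ≤ ∑ k ∈ Finset.Ioc j t, 1/(k:ℝ)^θ := by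
  have hr0 : (0:ℝ) < 1 - θ := by linarith
  set g : ℕ → ℝ := fun k => ((k:ℝ))^(1-θ) with hg
  have htel : ∑ k ∈ Finset.Ioc j t, (g (k+1) - g k) = g (t+1) - g (j+1) :=
    telescope_Ioc g t j hj
  have hper : ∀ k ∈ Finset.Ioc j t, g (k+1) - g k ≤ (1-θ) * (1/(k:ℝ)^θ) := by
    intro k hk
    have hk1 : 1 ≤ k := by have := (Finset.mem_Ioc.mp hk).1; omega
    have hk1' : (1:ℝ) ≤ (k:ℝ) := by exact_mod_cast hk1
    have hk0 : (0:ℝ) < (k:ℝ) := by linarith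
    have := rpow_succ_sub_le (k:ℝ) (1-θ) hk1' hr0.le (by linarith)
    have he : ((k:ℝ))^((1-θ)-1) = 1/(k:ℝ)^θ := by
      rw [show (1-θ)-1 = -θ by ring, Real.rpow_neg hk0.le, one_div]
    simp only [hg]
    push_cast
    calc ((k:ℝ)+1)^(1-θ) - (k:ℝ)^(1-θ) ≤ (1-θ) * (k:ℝ)^((1-θ)-1) := this
      _ = (1-θ) * (1/(k:ℝ)^θ) := by rw [he]
  have hsum : g (t+1) - g (j+1) ≤ (1-θ) * ∑ k ∈ Finset.Ioc j t, 1/(k:ℝ)^θ := by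
    rw [← htel, Finset.mul_sum]
    exact Finset.sum_le_sum hper
  rw [div_le_iff₀ hr0]
  simp only [hg] at hsum
  push_cast at hsum
  linarith

private lemma zeta_per (s x : ℝ) (hs0 : 0 < s) (hs1 : s ≤ 1) (hx2 : 2 ≤ x) :
    x^(-s) * x⁻¹ * s ≤ (x-1)^(-s) - x^(-s) := by
  have hx0 : (0:ℝ) < x := by linarith
  have hx10 : (0:ℝ) < x - 1 := by linarith
  have hb : ((1:ℝ) - 1/x)^s ≤ 1 - s * (1/x) := by
    have h0 : 1/x ≤ 1 := by rw [div_le_one hx0]; linarith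
    have h0' : (0:ℝ) < 1/x := by positivity
    have := rpow_one_add_le_one_add_mul_self (s := -(1/x)) (by linarith) hs0.le hs1
    calc ((1:ℝ) - 1/x)^s = (1 + -(1/x))^s := by ring_nf
      _ ≤ 1 + s * -(1/x) := this
      _ = 1 - s * (1/x) := by ring
  have hA0 : 0 < (x-1)^s := Real.rpow_pos_of_pos hx10 s
  have hB0 : 0 < x^s := Real.rpow_pos_of_pos hx0 s
  have h1 : (x-1)^s ≤ x^s * (1 - s*(1/x)) := by
    have hsplit : (x-1)^s = x^s * (1 - 1/x)^s := by
      rw [← Real.mul_rpow hx0.le (by rw [sub_nonneg]; rw [div_le_one hx0]; linarith)]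
      congr 1
      field_simp
    rw [hsplit]
    exact mul_le_mul_of_nonneg_left hb (Real.rpow_nonneg hx0.le s)
  have hgoalAB : (x-1)^s * (1 + s/x) ≤ x^s := by
    have e : x^s * (1 - s*(1/x)) * (1 + s/x) = x^s - x^s*(s/x)^2 := by
      field_simp
      ring
    linarith [mul_le_mul_of_nonneg_right h1 (show (0:ℝ) ≤ 1 + s/x by positivity),
      mul_nonneg hB0.le (sq_nonneg (s/x)), e.le, e.ge]
  have key : (1+s/x)/(x^s) ≤ 1/((x-1)^s) := by
    rw [div_le_div_iff₀ hB0 hA0]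
    nlinarith [hgoalAB]
  rw [Real.rpow_neg hx10.le, Real.rpow_neg hx0.le, inv_eq_one_div, inv_eq_one_div ((x-1)^s)]
  have hid : 1/(x^s) * x⁻¹ * s = (1+s/x)/(x^s) - 1/(x^s) := by
    field_simp
    ring
  rw [hid]
  linarith [key]

private lemma zeta_bound (θ : ℝ) (hθ1 : 1/2 < θ) (hθ2 : θ < 1) (t : ℕ) :
    ∑ i ∈ Finset.Icc 1 t, (1/(i:ℝ)^θ)^2 ≤ 2/(2*θ-1) := by
  set s : ℝ := 2*θ - 1 with hs
  have hs0 : 0 < s := by simp only [hs]; linarith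
  have hs1 : s < 1 := by simp only [hs]; linarith
  rcases Nat.eq_zero_or_pos t with rfl | ht
  · simp; positivity
  have hins : Finset.Icc 1 t = insert 1 (Finset.Ioc 1 t) := by
    rw [← Finset.Icc_erase_left, Finset.insert_erase (Finset.mem_Icc.mpr ⟨le_refl 1, ht⟩)]
  rw [hins, Finset.sum_insert (by simp)]
  set g : ℕ → ℝ := fun k => -(((k:ℝ)-1)^(-s))/s with hg
  have htel : ∑ k ∈ Finset.Ioc 1 t, (g (k+1) - g k) = g (t+1) - g 2 := telescope_Ioc g t 1 ht
  have hper : ∀ i ∈ Finset.Ioc 1 t, (1/(i:ℝ)^θ)^2 ≤ g (i+1) - g i := by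
    intro i hi
    have hi2 : 2 ≤ i := (Finset.mem_Ioc.mp hi).1
    have hx2 : (2:ℝ) ≤ (i:ℝ) := by exact_mod_cast hi2
    have hx0 : (0:ℝ) < (i:ℝ) := by linarith
    have hmain := zeta_per s (i:ℝ) hs0 hs1.le hx2
    have hlhs : (1/((i:ℝ))^θ)^2 = (i:ℝ)^(-s) * (i:ℝ)⁻¹ := by
      rw [one_div, ← Real.rpow_neg hx0.le, sq, ← Real.rpow_add hx0,
        show -θ + -θ = -s + -1 by rw [hs]; ring, Real.rpow_add hx0, Real.rpow_neg_one]
    have hgd : g (i+1) - g i = (((i:ℝ)-1)^(-s) - ((i:ℝ))^(-s))/s := by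
      simp only [hg]
      push_cast
      rw [show (i:ℝ)+1-1 = (i:ℝ) by ring]
      ring
    rw [hlhs, hgd, le_div_iff₀ hs0]
    exact hmain
  have hsum := Finset.sum_le_sum hper
  rw [htel] at hsum
  have hg2 : g 2 = -(1/s) := by
    simp only [hg]
    norm_num
    rw [neg_div, one_div]
  have hgt : g (t+1) ≤ 0 := by
    simp only [hg]
    push_cast
    rw [neg_div, neg_nonpos]
    have hb0 : (0:ℝ) ≤ (t:ℝ)+1-1 := by
      have : (0:ℝ) ≤ (t:ℝ) := Nat.cast_nonneg t
      linarith
    exact div_nonneg (Real.rpow_nonneg hb0 _) hs0.le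
  have h1 : (1/((1:ℕ):ℝ)^θ)^2 = 1 := by norm_num
  rw [h1]
  have h2s : (1:ℝ) + 1/s ≤ 2/s := by
    have he : (1:ℝ) + 1/s = (s+1)/s := by field_simp
    rw [he, div_le_div_iff₀ hs0 hs0]
    nlinarith
  linarith [hsum, hgt, hg2]

private lemma step_sum_le_one (θ α : ℝ) (hθ0 : 0 ≤ θ) (hα0 : 0 ≤ α) (hα1 : α ≤ 1) (t : ℕ) :
    ∑ i ∈ Finset.Icc 1 t, α/(i:ℝ)^θ * ∏ k ∈ Finset.Ioc i t, (1 - α/(k:ℝ)^θ) ≤ 1 := by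
  have hfac : ∀ k : ℕ, 1 ≤ k → α/(k:ℝ)^θ ≤ 1 ∧ 0 ≤ α/(k:ℝ)^θ := by
    intro k hk
    have hk1 : (1:ℝ) ≤ (k:ℝ) := by exact_mod_cast hk
    have h1 : (1:ℝ) ≤ (k:ℝ)^θ := Real.one_le_rpow hk1 hθ0
    exact ⟨(div_le_self hα0 h1).trans hα1, div_nonneg hα0 (by linarith)⟩
  induction t with
  | zero => simp
  | succ n ih =>
    rw [Finset.sum_Icc_succ_top (by omega : 1 ≤ n+1)]
    have hstep : ∀ i ∈ Finset.Icc 1 n, α/(i:ℝ)^θ * ∏ k ∈ Finset.Ioc i (n+1), (1 - α/(k:ℝ)^θ)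
        = (α/(i:ℝ)^θ * ∏ k ∈ Finset.Ioc i n, (1 - α/(k:ℝ)^θ)) * (1 - α/((n+1:ℕ):ℝ)^θ) := by
      intro i hi
      rw [Finset.prod_Ioc_succ_top (Finset.mem_Icc.mp hi).2]
      push_cast
      ring
    rw [Finset.sum_congr rfl hstep, ← Finset.sum_mul]
    have hIoc : Finset.Ioc (n+1) (n+1) = ∅ := by simp
    rw [hIoc, Finset.prod_empty, mul_one]
    have hb := hfac (n+1) (by omega)
    have hbn : 0 ≤ 1 - α/((n+1:ℕ):ℝ)^θ := by linarith [hb.1]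
    have h2 := mul_le_mul_of_nonneg_right ih hbn
    rw [one_mul] at h2
    linarith [hb.2, h2]

private lemma sum_shift_le (φ : ℕ → ℝ) (hφ : ∀ m, 1 ≤ m → 0 ≤ φ m) (i t : ℕ) (hit : i ≤ t) :
    ∑ j ∈ Finset.Ioc i t, φ (j - i) ≤ ∑ m ∈ Finset.Icc 1 t, φ m := by
  have h1 : Finset.Ioc i t = Finset.Ico (i+1) (t+1) := by
    rw [Finset.Ico_add_one_right_eq_Icc, Finset.Icc_add_one_left_eq_Ioc]
  have h2 : ∑ j ∈ Finset.Ioc i t, φ (j - i) = ∑ m ∈ Finset.range (t - i), φ (m + 1) := by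
    rw [h1, Finset.sum_Ico_eq_sum_range]
    have he : t + 1 - (i + 1) = t - i := by omega
    rw [he]
    exact Finset.sum_congr rfl (fun m _ => by congr 1; omega)
  have h3 : ∑ m ∈ Finset.Icc 1 t, φ m = ∑ m ∈ Finset.range t, φ (m + 1) := by
    rw [← Finset.Ico_add_one_right_eq_Icc, Finset.sum_Ico_eq_sum_range]
    have he : t + 1 - 1 = t := by omega
    rw [he]
    exact Finset.sum_congr rfl (fun m _ => by congr 1; omega)
  rw [h2, h3]
  apply Finset.sum_le_sum_of_subset_of_nonneg
  · exact Finset.range_subset_range.mpr (by omega)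
  · intro m _ _
    exact hφ (m+1) (by omega)

set_option maxHeartbeats 2000000 in
theorem pair_sum_mixing_bound
    (θ α : ℝ) (hθ : θ ∈ Set.Ioo (1/2 : ℝ) 1) (hα : α ∈ Set.Ioc (0 : ℝ) 1)
    (φ : ℕ → ℝ) (hφ : ∀ m : ℕ, 1 ≤ m → 0 ≤ φ m)
    (t : ℕ) (ht : 1 ≤ t) :
    ∑ i ∈ Finset.Icc 1 t, ∑ j ∈ Finset.Ioc i t,
        (1 / (i : ℝ) ^ θ) * (1 / (j : ℝ) ^ θ) *
          (∏ k ∈ Finset.Ioc i t, (1 - α / (k : ℝ) ^ θ)) *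
          (∏ l ∈ Finset.Ioc j t, (1 - α / (l : ℝ) ^ θ)) * φ (j - i) ≤
      (8 + 2 / (2 * θ - 1) * (θ / (Real.exp 1 * (2 - 2 ^ θ))) ^ (θ / (1 - θ))) *
        (1 / α) ^ (θ / (1 - θ)) * (1 / ((t : ℝ) + 1)) ^ θ * ∑ i ∈ Finset.Icc 1 t, φ i := by
  obtain ⟨hθ1, hθ2⟩ := hθ
  obtain ⟨hα0, hα1⟩ := hα
  have hθ0 : (0:ℝ) < θ := by linarith
  have h1θ : (0:ℝ) < 1 - θ := by linarith
  have hp1 : 1 ≤ θ/(1-θ) := by rw [le_div_iff₀ h1θ]; linarith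
  have hp0 : (0:ℝ) < θ/(1-θ) := lt_of_lt_of_le one_pos hp1
  have hT0 : (0:ℝ) < (t:ℝ)+1 := by positivity
  have h2θ2 : (2:ℝ)^θ < 2 := by
    have := Real.rpow_lt_rpow_of_exponent_lt (by norm_num : (1:ℝ) < 2) hθ2
    rwa [Real.rpow_one] at this
  have hc0 : (0:ℝ) < 2 - 2^θ := by linarith
  have hΦ0 : 0 ≤ ∑ m ∈ Finset.Icc 1 t, φ m :=
    Finset.sum_nonneg fun m hm => hφ m (Finset.mem_Icc.mp hm).1
  have hαp0 : (0:ℝ) ≤ (1/α)^(θ/(1-θ)) := Real.rpow_nonneg (by positivity) _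
  have hα1p : 1/α ≤ (1/α)^(θ/(1-θ)) := by
    have h1 : (1:ℝ) ≤ 1/α := by rw [le_div_iff₀ hα0]; linarith
    calc 1/α = (1/α)^(1:ℝ) := (Real.rpow_one _).symm
      _ ≤ (1/α)^(θ/(1-θ)) := Real.rpow_le_rpow_of_exponent_le h1 hp1
  have hb0 : ∀ k : ℕ, 1 ≤ k → 0 ≤ 1 - α/(k:ℝ)^θ := by
    intro k hk
    have hk1 : (1:ℝ) ≤ (k:ℝ)^θ := Real.one_le_rpow (by exact_mod_cast hk) hθ0.le
    have := (div_le_self hα0.le hk1).trans hα1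
    linarith
  have hb1 : ∀ k : ℕ, 1 - α/(k:ℝ)^θ ≤ 1 := by
    intro k
    have : 0 ≤ α/(k:ℝ)^θ := div_nonneg hα0.le (Real.rpow_nonneg (Nat.cast_nonneg k) θ)
    linarith
  have hP0 : ∀ i : ℕ, 0 ≤ ∏ k ∈ Finset.Ioc i t, (1 - α/(k:ℝ)^θ) := fun i =>
    Finset.prod_nonneg fun k hk => hb0 k (by have := (Finset.mem_Ioc.mp hk).1; omega)
  have hP1 : ∀ i : ℕ, ∏ k ∈ Finset.Ioc i t, (1 - α/(k:ℝ)^θ) ≤ 1 := fun i =>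
    Finset.prod_le_one (fun k hk => hb0 k (by have := (Finset.mem_Ioc.mp hk).1; omega))
      (fun k _ => hb1 k)
  have hPmono : ∀ i j : ℕ, i ≤ j → j ≤ t →
      ∏ k ∈ Finset.Ioc i t, (1 - α/(k:ℝ)^θ) ≤ ∏ k ∈ Finset.Ioc j t, (1 - α/(k:ℝ)^θ) := by
    intro i j hij hjt
    rw [← Finset.prod_Ioc_consecutive _ hij hjt]
    have h1 : ∏ k ∈ Finset.Ioc i j, (1 - α/(k:ℝ)^θ) ≤ 1 :=
      Finset.prod_le_one (fun k hk => hb0 k (by have := (Finset.mem_Ioc.mp hk).1; omega))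
        (fun k _ => hb1 k)
    exact mul_le_of_le_one_left (hP0 j) h1
  have hPexp : ∀ j : ℕ, ∏ k ∈ Finset.Ioc j t, (1 - α/(k:ℝ)^θ) ≤
      Real.exp (-(α * ∑ k ∈ Finset.Ioc j t, 1/(k:ℝ)^θ)) := by
    intro j
    calc ∏ k ∈ Finset.Ioc j t, (1 - α/(k:ℝ)^θ)
        ≤ ∏ k ∈ Finset.Ioc j t, Real.exp (-(α/(k:ℝ)^θ)) := by
          apply Finset.prod_le_prod
            (fun k hk => hb0 k (by have := (Finset.mem_Ioc.mp hk).1; omega))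
          intro k _
          have := Real.add_one_le_exp (-(α/(k:ℝ)^θ))
          linarith
      _ = Real.exp (∑ k ∈ Finset.Ioc j t, -(α/(k:ℝ)^θ)) := (Real.exp_sum _ _).symm
      _ = Real.exp (-(α * ∑ k ∈ Finset.Ioc j t, 1/(k:ℝ)^θ)) := by
          congr 1
          rw [Finset.mul_sum, ← Finset.sum_neg_distrib]
          exact Finset.sum_congr rfl fun k _ => by rw [mul_one_div]
  -- key bound for small j
  have hK : ∀ j : ℕ, j ≤ t → 2*j < t →
      (∏ k ∈ Finset.Ioc j t, (1 - α/(k:ℝ)^θ))^2 ≤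
        (θ/(Real.exp 1 * (2 - 2^θ)))^(θ/(1-θ)) * (1/α)^(θ/(1-θ)) * (1/((t:ℝ)+1))^θ := by
    intro j hjt h2j
    have hSlow : ((((t:ℝ)+1))^(1-θ) - ((j:ℝ)+1)^(1-θ))/(1-θ) ≤
        ∑ k ∈ Finset.Ioc j t, 1/(k:ℝ)^θ := sum_inv_rpow_lower θ hθ0 hθ2 j t hjt
    have hj2 : (j:ℝ)+1 ≤ ((t:ℝ)+1)/2 := by
      have h : (2*j:ℕ) + 2 ≤ t + 1 := by omega
      have h' : ((2*j+2 : ℕ):ℝ) ≤ ((t+1 : ℕ):ℝ) := by exact_mod_cast h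
      push_cast at h'
      linarith
    have hup : ((j:ℝ)+1)^(1-θ) ≤ (((t:ℝ)+1)/2)^(1-θ) :=
      Real.rpow_le_rpow (by positivity) hj2 h1θ.le
    have hpow2 : (2:ℝ)^(1-θ) * (2:ℝ)^θ = 2 := by
      rw [← Real.rpow_add (by norm_num : (0:ℝ) < 2), show 1-θ+θ = 1 by ring, Real.rpow_one]
    have h2r0 : (0:ℝ) < (2:ℝ)^(1-θ) := Real.rpow_pos_of_pos (by norm_num) _
    have hhalf : (((t:ℝ)+1)/2)^(1-θ) = ((t:ℝ)+1)^(1-θ) * (2:ℝ)^θ / 2 := by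
      rw [Real.div_rpow hT0.le (by norm_num : (0:ℝ) ≤ 2)]
      rw [div_eq_div_iff h2r0.ne' (by norm_num : (2:ℝ) ≠ 0)]
      linear_combination (-(((t:ℝ)+1)^(1-θ))) * hpow2
    have hSlow2 : ((t:ℝ)+1)^(1-θ) * (2 - 2^θ) / (2*(1-θ)) ≤
        ∑ k ∈ Finset.Ioc j t, 1/(k:ℝ)^θ := by
      have h1 : ((t:ℝ)+1)^(1-θ) - (((t:ℝ)+1)/2)^(1-θ) ≤
          ((t:ℝ)+1)^(1-θ) - ((j:ℝ)+1)^(1-θ) := by linarith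
      rw [hhalf] at h1
      calc ((t:ℝ)+1)^(1-θ)*(2-2^θ)/(2*(1-θ))
          = (((t:ℝ)+1)^(1-θ) - ((t:ℝ)+1)^(1-θ)*(2:ℝ)^θ/2)/(1-θ) := by
            rw [div_eq_div_iff (mul_pos two_pos h1θ).ne' h1θ.ne']
            ring
        _ ≤ (((t:ℝ)+1)^(1-θ) - ((j:ℝ)+1)^(1-θ))/(1-θ) := by
            rw [div_le_div_iff₀ h1θ h1θ]
            nlinarith [h1]
        _ ≤ _ := hSlow
    have hx0 : (0:ℝ) < α * (2-2^θ) * ((t:ℝ)+1)^(1-θ) / (1-θ) :=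
      div_pos (mul_pos (mul_pos hα0 hc0) (Real.rpow_pos_of_pos hT0 _)) h1θ
    have hxle : α * (2-2^θ) * ((t:ℝ)+1)^(1-θ) / (1-θ) ≤
        2*(α * ∑ k ∈ Finset.Ioc j t, 1/(k:ℝ)^θ) := by
      have h2 := mul_le_mul_of_nonneg_left hSlow2 (by positivity : (0:ℝ) ≤ 2*α)
      calc α * (2-2^θ) * ((t:ℝ)+1)^(1-θ) / (1-θ)
          = 2*α*(((t:ℝ)+1)^(1-θ) * (2-2^θ)/(2*(1-θ))) := by
            field_simp [h1θ.ne']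
        _ ≤ 2*α*(∑ k ∈ Finset.Ioc j t, 1/(k:ℝ)^θ) := h2
        _ = 2*(α * ∑ k ∈ Finset.Ioc j t, 1/(k:ℝ)^θ) := by ring
    have hPsq : (∏ k ∈ Finset.Ioc j t, (1 - α/(k:ℝ)^θ))^2 ≤
        Real.exp (-(α * (2-2^θ) * ((t:ℝ)+1)^(1-θ)/(1-θ))) := by
      calc (∏ k ∈ Finset.Ioc j t, (1 - α/(k:ℝ)^θ))^2
          ≤ (Real.exp (-(α * ∑ k ∈ Finset.Ioc j t, 1/(k:ℝ)^θ)))^2 :=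
            pow_le_pow_left₀ (hP0 j) (hPexp j) 2
        _ = Real.exp (-(2*(α * ∑ k ∈ Finset.Ioc j t, 1/(k:ℝ)^θ))) := by
            rw [sq, ← Real.exp_add]; congr 1; ring
        _ ≤ Real.exp (-(α * (2-2^θ) * ((t:ℝ)+1)^(1-θ)/(1-θ))) :=
            Real.exp_le_exp.mpr (by linarith)
    have hexp := exp_neg_le_rpow (θ/(1-θ)) (α * (2-2^θ) * ((t:ℝ)+1)^(1-θ)/(1-θ)) hp0 hx0
    have he0 : Real.exp 1 ≠ 0 := (Real.exp_pos 1).ne'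
    have hr0 : ((t:ℝ)+1)^(1-θ) ≠ 0 := (Real.rpow_pos_of_pos hT0 _).ne'
    have hfrac : (θ/(1-θ)) / (Real.exp 1 * (α*(2-2^θ)*((t:ℝ)+1)^(1-θ)/(1-θ)))
        = (θ/(Real.exp 1 * (2-2^θ))) * (1/α) * (((t:ℝ)+1)^(1-θ))⁻¹ := by
      field_simp
    have hbase0 : (0:ℝ) ≤ θ/(Real.exp 1 * (2-2^θ)) :=
      div_nonneg hθ0.le (mul_nonneg (Real.exp_pos 1).le hc0.le)
    have hsplitpow : ((θ/(Real.exp 1 * (2-2^θ))) * (1/α) * (((t:ℝ)+1)^(1-θ))⁻¹)^(θ/(1-θ))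
        = (θ/(Real.exp 1 * (2-2^θ)))^(θ/(1-θ)) * (1/α)^(θ/(1-θ)) * (1/((t:ℝ)+1))^θ := by
      rw [Real.mul_rpow (mul_nonneg hbase0 (by positivity)) (by positivity),
        Real.mul_rpow hbase0 (by positivity)]
      congr 1
      rw [← Real.rpow_neg hT0.le, ← Real.rpow_mul hT0.le]
      rw [show -(1-θ)*(θ/(1-θ)) = -θ by rw [neg_mul, neg_inj]; field_simp [h1θ.ne']]
      rw [Real.rpow_neg hT0.le, ← Real.inv_rpow hT0.le, inv_eq_one_div]
    calc (∏ k ∈ Finset.Ioc j t, (1 - α/(k:ℝ)^θ))^2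
        ≤ Real.exp (-(α * (2-2^θ) * ((t:ℝ)+1)^(1-θ)/(1-θ))) := hPsq
      _ ≤ ((θ/(1-θ)) / (Real.exp 1 * (α*(2-2^θ)*((t:ℝ)+1)^(1-θ)/(1-θ))))^(θ/(1-θ)) := hexp
      _ = _ := by rw [hfrac]; exact hsplitpow
  -- big j bound
  have hbig : ∀ j : ℕ, 1 ≤ j → t ≤ 2*j → 1/(j:ℝ)^θ ≤ 4 * (1/((t:ℝ)+1))^θ := by
    intro j hj1 h2j
    have hj0 : (0:ℝ) < (j:ℝ) := by exact_mod_cast hj1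
    have hT4 : (t:ℝ)+1 ≤ 4*(j:ℝ) := by
      have h : t + 1 ≤ 4*j := by omega
      have h' : ((t+1:ℕ):ℝ) ≤ ((4*j:ℕ):ℝ) := by exact_mod_cast h
      push_cast at h'
      linarith
    have h1 : ((t:ℝ)+1)^θ ≤ ((4:ℝ)*(j:ℝ))^θ := Real.rpow_le_rpow hT0.le hT4 hθ0.le
    have h2 : ((4:ℝ)*(j:ℝ))^θ = (4:ℝ)^θ * (j:ℝ)^θ :=
      Real.mul_rpow (by norm_num) (Nat.cast_nonneg j)
    have h3 : (4:ℝ)^θ ≤ 4 := by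
      calc (4:ℝ)^θ ≤ (4:ℝ)^(1:ℝ) :=
            Real.rpow_le_rpow_of_exponent_le (by norm_num) hθ2.le
        _ = 4 := Real.rpow_one 4
    have hjθ : (0:ℝ) < (j:ℝ)^θ := Real.rpow_pos_of_pos hj0 θ
    have hTθ : (0:ℝ) < ((t:ℝ)+1)^θ := Real.rpow_pos_of_pos hT0 θ
    have h4 : ((t:ℝ)+1)^θ ≤ 4 * (j:ℝ)^θ := by
      calc ((t:ℝ)+1)^θ ≤ (4:ℝ)^θ * (j:ℝ)^θ := by rw [← h2]; exact h1
        _ ≤ 4 * (j:ℝ)^θ := mul_le_mul_of_nonneg_right h3 hjθ.le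
    have he : 4 * (1/((t:ℝ)+1))^θ = 4/(((t:ℝ)+1)^θ) := by
      rw [one_div, Real.inv_rpow hT0.le, ← div_eq_mul_inv]
    rw [he, div_le_div_iff₀ hjθ hTθ]
    nlinarith [h4, hjθ]
  -- sum of 1/i^θ * P i is at most 1/α
  have hPsum : ∑ i ∈ Finset.Icc 1 t,
      (1/(i:ℝ)^θ * ∏ k ∈ Finset.Ioc i t, (1 - α/(k:ℝ)^θ)) ≤ 1/α := by
    have h := step_sum_le_one θ α hθ0.le hα0.le hα1 t
    have heq : ∑ i ∈ Finset.Icc 1 t, α/(i:ℝ)^θ * ∏ k ∈ Finset.Ioc i t, (1 - α/(k:ℝ)^θ)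
        = α * ∑ i ∈ Finset.Icc 1 t, (1/(i:ℝ)^θ * ∏ k ∈ Finset.Ioc i t, (1 - α/(k:ℝ)^θ)) := by
      rw [Finset.mul_sum]
      exact Finset.sum_congr rfl fun i _ => by rw [← mul_assoc, mul_one_div]
    rw [heq] at h
    rw [le_div_iff₀ hα0]
    nlinarith [h]
  have hbase0 : (0:ℝ) ≤ θ/(Real.exp 1 * (2-2^θ)) :=
    div_nonneg hθ0.le (mul_nonneg (Real.exp_pos 1).le hc0.le)
  have hK0 : (0:ℝ) ≤ (θ/(Real.exp 1 * (2-2^θ)))^(θ/(1-θ)) * (1/α)^(θ/(1-θ)) * (1/((t:ℝ)+1))^θ :=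
    mul_nonneg (mul_nonneg (Real.rpow_nonneg hbase0 _) hαp0)
      (Real.rpow_nonneg (by positivity) θ)
  -- Part A
  have hAi : ∀ i ∈ Finset.Icc 1 t,
      ∑ j ∈ (Finset.Ioc i t).filter (fun j => t ≤ 2*j),
        (1/(i:ℝ)^θ) * (1/(j:ℝ)^θ) * (∏ k ∈ Finset.Ioc i t, (1 - α/(k:ℝ)^θ)) *
          (∏ l ∈ Finset.Ioc j t, (1 - α/(l:ℝ)^θ)) * φ (j-i)
      ≤ (1/(i:ℝ)^θ * ∏ k ∈ Finset.Ioc i t, (1 - α/(k:ℝ)^θ)) *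
          (4*(1/((t:ℝ)+1))^θ * ∑ m ∈ Finset.Icc 1 t, φ m) := by
    intro i hi
    obtain ⟨hi1, hit⟩ := Finset.mem_Icc.mp hi
    have hper : ∀ j ∈ (Finset.Ioc i t).filter (fun j => t ≤ 2*j),
        (1/(i:ℝ)^θ) * (1/(j:ℝ)^θ) * (∏ k ∈ Finset.Ioc i t, (1 - α/(k:ℝ)^θ)) *
          (∏ l ∈ Finset.Ioc j t, (1 - α/(l:ℝ)^θ)) * φ (j-i)
        ≤ (1/(i:ℝ)^θ * ∏ k ∈ Finset.Ioc i t, (1 - α/(k:ℝ)^θ)) *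
            (4*(1/((t:ℝ)+1))^θ) * φ (j-i) := by
      intro j hj
      obtain ⟨hjm, h2j⟩ := Finset.mem_filter.mp hj
      obtain ⟨hij, hjt⟩ := Finset.mem_Ioc.mp hjm
      have hφ0 : 0 ≤ φ (j-i) := hφ _ (by omega)
      have hj1 : 1 ≤ j := by omega
      apply mul_le_mul_of_nonneg_right ?_ hφ0
      have e : (1/(i:ℝ)^θ) * (1/(j:ℝ)^θ) * (∏ k ∈ Finset.Ioc i t, (1 - α/(k:ℝ)^θ)) *
          (∏ l ∈ Finset.Ioc j t, (1 - α/(l:ℝ)^θ))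
          = (1/(i:ℝ)^θ * ∏ k ∈ Finset.Ioc i t, (1 - α/(k:ℝ)^θ)) *
            ((1/(j:ℝ)^θ) * ∏ l ∈ Finset.Ioc j t, (1 - α/(l:ℝ)^θ)) := by ring
      rw [e]
      apply mul_le_mul_of_nonneg_left ?_ (mul_nonneg (by positivity) (hP0 i))
      calc (1/(j:ℝ)^θ) * ∏ l ∈ Finset.Ioc j t, (1 - α/(l:ℝ)^θ)
          ≤ (1/(j:ℝ)^θ) * 1 := mul_le_mul_of_nonneg_left (hP1 j) (by positivity)
        _ = 1/(j:ℝ)^θ := mul_one _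
        _ ≤ 4*(1/((t:ℝ)+1))^θ := hbig j hj1 h2j
    calc ∑ j ∈ (Finset.Ioc i t).filter (fun j => t ≤ 2*j),
        (1/(i:ℝ)^θ) * (1/(j:ℝ)^θ) * (∏ k ∈ Finset.Ioc i t, (1 - α/(k:ℝ)^θ)) *
          (∏ l ∈ Finset.Ioc j t, (1 - α/(l:ℝ)^θ)) * φ (j-i)
        ≤ ∑ j ∈ (Finset.Ioc i t).filter (fun j => t ≤ 2*j),
            (1/(i:ℝ)^θ * ∏ k ∈ Finset.Ioc i t, (1 - α/(k:ℝ)^θ)) *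
              (4*(1/((t:ℝ)+1))^θ) * φ (j-i) := Finset.sum_le_sum hper
      _ ≤ ∑ j ∈ Finset.Ioc i t,
            (1/(i:ℝ)^θ * ∏ k ∈ Finset.Ioc i t, (1 - α/(k:ℝ)^θ)) *
              (4*(1/((t:ℝ)+1))^θ) * φ (j-i) := by
          apply Finset.sum_le_sum_of_subset_of_nonneg (Finset.filter_subset _ _)
          intro j hj _
          obtain ⟨hij, hjt⟩ := Finset.mem_Ioc.mp hj
          exact mul_nonneg (mul_nonneg (mul_nonneg (by positivity) (hP0 i)) (by positivity))
            (hφ _ (by omega))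
      _ = (1/(i:ℝ)^θ * ∏ k ∈ Finset.Ioc i t, (1 - α/(k:ℝ)^θ)) * (4*(1/((t:ℝ)+1))^θ) *
            ∑ j ∈ Finset.Ioc i t, φ (j-i) := by rw [← Finset.mul_sum]
      _ ≤ (1/(i:ℝ)^θ * ∏ k ∈ Finset.Ioc i t, (1 - α/(k:ℝ)^θ)) * (4*(1/((t:ℝ)+1))^θ) *
            ∑ m ∈ Finset.Icc 1 t, φ m := by
          apply mul_le_mul_of_nonneg_left (sum_shift_le φ hφ i t hit)
            (mul_nonneg (mul_nonneg (by positivity) (hP0 i)) (by positivity))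
      _ = (1/(i:ℝ)^θ * ∏ k ∈ Finset.Ioc i t, (1 - α/(k:ℝ)^θ)) *
            (4*(1/((t:ℝ)+1))^θ * ∑ m ∈ Finset.Icc 1 t, φ m) := by ring
  have hnn : (0:ℝ) ≤ 4*(1/((t:ℝ)+1))^θ * ∑ m ∈ Finset.Icc 1 t, φ m :=
    mul_nonneg (by positivity) hΦ0
  have hA : ∑ i ∈ Finset.Icc 1 t, ∑ j ∈ (Finset.Ioc i t).filter (fun j => t ≤ 2*j),
        (1/(i:ℝ)^θ) * (1/(j:ℝ)^θ) * (∏ k ∈ Finset.Ioc i t, (1 - α/(k:ℝ)^θ)) *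
          (∏ l ∈ Finset.Ioc j t, (1 - α/(l:ℝ)^θ)) * φ (j-i)
      ≤ 4 * ((1/α)^(θ/(1-θ)) * (1/((t:ℝ)+1))^θ * ∑ m ∈ Finset.Icc 1 t, φ m) := by
    calc ∑ i ∈ Finset.Icc 1 t, ∑ j ∈ (Finset.Ioc i t).filter (fun j => t ≤ 2*j),
        (1/(i:ℝ)^θ) * (1/(j:ℝ)^θ) * (∏ k ∈ Finset.Ioc i t, (1 - α/(k:ℝ)^θ)) *
          (∏ l ∈ Finset.Ioc j t, (1 - α/(l:ℝ)^θ)) * φ (j-i)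
        ≤ ∑ i ∈ Finset.Icc 1 t, (1/(i:ℝ)^θ * ∏ k ∈ Finset.Ioc i t, (1 - α/(k:ℝ)^θ)) *
            (4*(1/((t:ℝ)+1))^θ * ∑ m ∈ Finset.Icc 1 t, φ m) := Finset.sum_le_sum hAi
      _ = (∑ i ∈ Finset.Icc 1 t, (1/(i:ℝ)^θ * ∏ k ∈ Finset.Ioc i t, (1 - α/(k:ℝ)^θ))) *
            (4*(1/((t:ℝ)+1))^θ * ∑ m ∈ Finset.Icc 1 t, φ m) := (Finset.sum_mul _ _ _).symm
      _ ≤ (1/α) * (4*(1/((t:ℝ)+1))^θ * ∑ m ∈ Finset.Icc 1 t, φ m) :=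
            mul_le_mul_of_nonneg_right hPsum hnn
      _ ≤ ((1/α)^(θ/(1-θ))) * (4*(1/((t:ℝ)+1))^θ * ∑ m ∈ Finset.Icc 1 t, φ m) :=
            mul_le_mul_of_nonneg_right hα1p hnn
      _ = 4 * ((1/α)^(θ/(1-θ)) * (1/((t:ℝ)+1))^θ * ∑ m ∈ Finset.Icc 1 t, φ m) := by ring
  -- Part B
  have hBi : ∀ i ∈ Finset.Icc 1 t,
      ∑ j ∈ (Finset.Ioc i t).filter (fun j => ¬ t ≤ 2*j),
        (1/(i:ℝ)^θ) * (1/(j:ℝ)^θ) * (∏ k ∈ Finset.Ioc i t, (1 - α/(k:ℝ)^θ)) *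
          (∏ l ∈ Finset.Ioc j t, (1 - α/(l:ℝ)^θ)) * φ (j-i)
      ≤ (1/(i:ℝ)^θ)^2 * ((θ/(Real.exp 1 * (2-2^θ)))^(θ/(1-θ)) * (1/α)^(θ/(1-θ)) *
          (1/((t:ℝ)+1))^θ * ∑ m ∈ Finset.Icc 1 t, φ m) := by
    intro i hi
    obtain ⟨hi1, hit⟩ := Finset.mem_Icc.mp hi
    have hiR : (0:ℝ) < (i:ℝ) := by exact_mod_cast hi1
    have hiθ : (0:ℝ) < (i:ℝ)^θ := Real.rpow_pos_of_pos hiR θ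
    have hper : ∀ j ∈ (Finset.Ioc i t).filter (fun j => ¬ t ≤ 2*j),
        (1/(i:ℝ)^θ) * (1/(j:ℝ)^θ) * (∏ k ∈ Finset.Ioc i t, (1 - α/(k:ℝ)^θ)) *
          (∏ l ∈ Finset.Ioc j t, (1 - α/(l:ℝ)^θ)) * φ (j-i)
        ≤ (1/(i:ℝ)^θ)^2 * ((θ/(Real.exp 1 * (2-2^θ)))^(θ/(1-θ)) * (1/α)^(θ/(1-θ)) *
            (1/((t:ℝ)+1))^θ) * φ (j-i) := by
      intro j hj
      obtain ⟨hjm, h2j'⟩ := Finset.mem_filter.mp hj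
      obtain ⟨hij, hjt⟩ := Finset.mem_Ioc.mp hjm
      have h2j : 2*j < t := by omega
      have hφ0 : 0 ≤ φ (j-i) := hφ _ (by omega)
      have hji : 1/(j:ℝ)^θ ≤ 1/(i:ℝ)^θ := by
        apply one_div_le_one_div_of_le hiθ
        exact Real.rpow_le_rpow hiR.le (by exact_mod_cast hij.le) hθ0.le
      have hPPK : (∏ k ∈ Finset.Ioc i t, (1 - α/(k:ℝ)^θ)) *
          (∏ l ∈ Finset.Ioc j t, (1 - α/(l:ℝ)^θ))
          ≤ (θ/(Real.exp 1 * (2-2^θ)))^(θ/(1-θ)) * (1/α)^(θ/(1-θ)) * (1/((t:ℝ)+1))^θ := by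
        calc (∏ k ∈ Finset.Ioc i t, (1 - α/(k:ℝ)^θ)) *
              (∏ l ∈ Finset.Ioc j t, (1 - α/(l:ℝ)^θ))
            ≤ (∏ l ∈ Finset.Ioc j t, (1 - α/(l:ℝ)^θ)) *
              (∏ l ∈ Finset.Ioc j t, (1 - α/(l:ℝ)^θ)) :=
              mul_le_mul_of_nonneg_right (hPmono i j hij.le hjt) (hP0 j)
          _ = (∏ l ∈ Finset.Ioc j t, (1 - α/(l:ℝ)^θ))^2 := (sq _).symm
          _ ≤ _ := hK j hjt h2j
      apply mul_le_mul_of_nonneg_right ?_ hφ0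
      have e : (1/(i:ℝ)^θ) * (1/(j:ℝ)^θ) * (∏ k ∈ Finset.Ioc i t, (1 - α/(k:ℝ)^θ)) *
          (∏ l ∈ Finset.Ioc j t, (1 - α/(l:ℝ)^θ))
          = ((1/(i:ℝ)^θ) * (1/(j:ℝ)^θ)) * ((∏ k ∈ Finset.Ioc i t, (1 - α/(k:ℝ)^θ)) *
            (∏ l ∈ Finset.Ioc j t, (1 - α/(l:ℝ)^θ))) := by ring
      rw [e]
      calc ((1/(i:ℝ)^θ) * (1/(j:ℝ)^θ)) * ((∏ k ∈ Finset.Ioc i t, (1 - α/(k:ℝ)^θ)) *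
            (∏ l ∈ Finset.Ioc j t, (1 - α/(l:ℝ)^θ)))
          ≤ ((1/(i:ℝ)^θ) * (1/(j:ℝ)^θ)) * ((θ/(Real.exp 1 * (2-2^θ)))^(θ/(1-θ)) *
              (1/α)^(θ/(1-θ)) * (1/((t:ℝ)+1))^θ) :=
            mul_le_mul_of_nonneg_left hPPK (mul_nonneg (by positivity) (by positivity))
        _ ≤ ((1/(i:ℝ)^θ) * (1/(i:ℝ)^θ)) * ((θ/(Real.exp 1 * (2-2^θ)))^(θ/(1-θ)) *
              (1/α)^(θ/(1-θ)) * (1/((t:ℝ)+1))^θ) :=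
            mul_le_mul_of_nonneg_right
              (mul_le_mul_of_nonneg_left hji (by positivity)) hK0
        _ = (1/(i:ℝ)^θ)^2 * ((θ/(Real.exp 1 * (2-2^θ)))^(θ/(1-θ)) * (1/α)^(θ/(1-θ)) *
              (1/((t:ℝ)+1))^θ) := by ring
    calc ∑ j ∈ (Finset.Ioc i t).filter (fun j => ¬ t ≤ 2*j),
        (1/(i:ℝ)^θ) * (1/(j:ℝ)^θ) * (∏ k ∈ Finset.Ioc i t, (1 - α/(k:ℝ)^θ)) *
          (∏ l ∈ Finset.Ioc j t, (1 - α/(l:ℝ)^θ)) * φ (j-i)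
        ≤ ∑ j ∈ (Finset.Ioc i t).filter (fun j => ¬ t ≤ 2*j),
            (1/(i:ℝ)^θ)^2 * ((θ/(Real.exp 1 * (2-2^θ)))^(θ/(1-θ)) * (1/α)^(θ/(1-θ)) *
              (1/((t:ℝ)+1))^θ) * φ (j-i) := Finset.sum_le_sum hper
      _ ≤ ∑ j ∈ Finset.Ioc i t,
            (1/(i:ℝ)^θ)^2 * ((θ/(Real.exp 1 * (2-2^θ)))^(θ/(1-θ)) * (1/α)^(θ/(1-θ)) *
              (1/((t:ℝ)+1))^θ) * φ (j-i) := by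
          apply Finset.sum_le_sum_of_subset_of_nonneg (Finset.filter_subset _ _)
          intro j hj _
          obtain ⟨hij, hjt⟩ := Finset.mem_Ioc.mp hj
          exact mul_nonneg (mul_nonneg (by positivity) hK0) (hφ _ (by omega))
      _ = (1/(i:ℝ)^θ)^2 * ((θ/(Real.exp 1 * (2-2^θ)))^(θ/(1-θ)) * (1/α)^(θ/(1-θ)) *
            (1/((t:ℝ)+1))^θ) * ∑ j ∈ Finset.Ioc i t, φ (j-i) := by rw [← Finset.mul_sum]
      _ ≤ (1/(i:ℝ)^θ)^2 * ((θ/(Real.exp 1 * (2-2^θ)))^(θ/(1-θ)) * (1/α)^(θ/(1-θ)) *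
            (1/((t:ℝ)+1))^θ) * ∑ m ∈ Finset.Icc 1 t, φ m := by
          apply mul_le_mul_of_nonneg_left (sum_shift_le φ hφ i t hit)
            (mul_nonneg (by positivity) hK0)
      _ = (1/(i:ℝ)^θ)^2 * ((θ/(Real.exp 1 * (2-2^θ)))^(θ/(1-θ)) * (1/α)^(θ/(1-θ)) *
            (1/((t:ℝ)+1))^θ * ∑ m ∈ Finset.Icc 1 t, φ m) := by ring
  have hKΦ0 : (0:ℝ) ≤ (θ/(Real.exp 1 * (2-2^θ)))^(θ/(1-θ)) * (1/α)^(θ/(1-θ)) *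
      (1/((t:ℝ)+1))^θ * ∑ m ∈ Finset.Icc 1 t, φ m := mul_nonneg hK0 hΦ0
  have hB : ∑ i ∈ Finset.Icc 1 t, ∑ j ∈ (Finset.Ioc i t).filter (fun j => ¬ t ≤ 2*j),
        (1/(i:ℝ)^θ) * (1/(j:ℝ)^θ) * (∏ k ∈ Finset.Ioc i t, (1 - α/(k:ℝ)^θ)) *
          (∏ l ∈ Finset.Ioc j t, (1 - α/(l:ℝ)^θ)) * φ (j-i)
      ≤ (2/(2*θ-1)) * ((θ/(Real.exp 1 * (2-2^θ)))^(θ/(1-θ)) * (1/α)^(θ/(1-θ)) *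
          (1/((t:ℝ)+1))^θ * ∑ m ∈ Finset.Icc 1 t, φ m) := by
    calc ∑ i ∈ Finset.Icc 1 t, ∑ j ∈ (Finset.Ioc i t).filter (fun j => ¬ t ≤ 2*j),
        (1/(i:ℝ)^θ) * (1/(j:ℝ)^θ) * (∏ k ∈ Finset.Ioc i t, (1 - α/(k:ℝ)^θ)) *
          (∏ l ∈ Finset.Ioc j t, (1 - α/(l:ℝ)^θ)) * φ (j-i)
        ≤ ∑ i ∈ Finset.Icc 1 t, (1/(i:ℝ)^θ)^2 *
            ((θ/(Real.exp 1 * (2-2^θ)))^(θ/(1-θ)) * (1/α)^(θ/(1-θ)) *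
              (1/((t:ℝ)+1))^θ * ∑ m ∈ Finset.Icc 1 t, φ m) := Finset.sum_le_sum hBi
      _ = (∑ i ∈ Finset.Icc 1 t, (1/(i:ℝ)^θ)^2) *
            ((θ/(Real.exp 1 * (2-2^θ)))^(θ/(1-θ)) * (1/α)^(θ/(1-θ)) *
              (1/((t:ℝ)+1))^θ * ∑ m ∈ Finset.Icc 1 t, φ m) := (Finset.sum_mul _ _ _).symm
      _ ≤ (2/(2*θ-1)) * ((θ/(Real.exp 1 * (2-2^θ)))^(θ/(1-θ)) * (1/α)^(θ/(1-θ)) *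
            (1/((t:ℝ)+1))^θ * ∑ m ∈ Finset.Icc 1 t, φ m) :=
          mul_le_mul_of_nonneg_right (zeta_bound θ hθ1 hθ2 t) hKΦ0
  -- combine
  have hX0 : (0:ℝ) ≤ (1/α)^(θ/(1-θ)) * (1/((t:ℝ)+1))^θ * ∑ m ∈ Finset.Icc 1 t, φ m :=
    mul_nonneg (mul_nonneg hαp0 (by positivity)) hΦ0
  calc ∑ i ∈ Finset.Icc 1 t, ∑ j ∈ Finset.Ioc i t,
        (1/(i:ℝ)^θ) * (1/(j:ℝ)^θ) * (∏ k ∈ Finset.Ioc i t, (1 - α/(k:ℝ)^θ)) *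
          (∏ l ∈ Finset.Ioc j t, (1 - α/(l:ℝ)^θ)) * φ (j-i)
      = ∑ i ∈ Finset.Icc 1 t,
          ((∑ j ∈ (Finset.Ioc i t).filter (fun j => t ≤ 2*j),
            (1/(i:ℝ)^θ) * (1/(j:ℝ)^θ) * (∏ k ∈ Finset.Ioc i t, (1 - α/(k:ℝ)^θ)) *
              (∏ l ∈ Finset.Ioc j t, (1 - α/(l:ℝ)^θ)) * φ (j-i)) +
          (∑ j ∈ (Finset.Ioc i t).filter (fun j => ¬ t ≤ 2*j),
            (1/(i:ℝ)^θ) * (1/(j:ℝ)^θ) * (∏ k ∈ Finset.Ioc i t, (1 - α/(k:ℝ)^θ)) *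
              (∏ l ∈ Finset.Ioc j t, (1 - α/(l:ℝ)^θ)) * φ (j-i))) :=
        Finset.sum_congr rfl (fun i _ => (Finset.sum_filter_add_sum_filter_not _ _ _).symm)
    _ = (∑ i ∈ Finset.Icc 1 t, ∑ j ∈ (Finset.Ioc i t).filter (fun j => t ≤ 2*j),
            (1/(i:ℝ)^θ) * (1/(j:ℝ)^θ) * (∏ k ∈ Finset.Ioc i t, (1 - α/(k:ℝ)^θ)) *
              (∏ l ∈ Finset.Ioc j t, (1 - α/(l:ℝ)^θ)) * φ (j-i)) +
        (∑ i ∈ Finset.Icc 1 t, ∑ j ∈ (Finset.Ioc i t).filter (fun j => ¬ t ≤ 2*j),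
            (1/(i:ℝ)^θ) * (1/(j:ℝ)^θ) * (∏ k ∈ Finset.Ioc i t, (1 - α/(k:ℝ)^θ)) *
              (∏ l ∈ Finset.Ioc j t, (1 - α/(l:ℝ)^θ)) * φ (j-i)) := Finset.sum_add_distrib
    _ ≤ 4 * ((1/α)^(θ/(1-θ)) * (1/((t:ℝ)+1))^θ * ∑ m ∈ Finset.Icc 1 t, φ m) +
        (2/(2*θ-1)) * ((θ/(Real.exp 1 * (2-2^θ)))^(θ/(1-θ)) * (1/α)^(θ/(1-θ)) *
          (1/((t:ℝ)+1))^θ * ∑ m ∈ Finset.Icc 1 t, φ m) := add_le_add hA hB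
    _ ≤ (8 + 2/(2*θ-1) * (θ/(Real.exp 1 * (2-2^θ)))^(θ/(1-θ))) *
          (1/α)^(θ/(1-θ)) * (1/((t:ℝ)+1))^θ * ∑ i ∈ Finset.Icc 1 t, φ i := by
        nlinarith [hX0]
end

section
/- Let α ∈ (0, 1) and let (φ_m)_{m ≥ 1} be any sequence of nonnegative real numbers. Then for every t ≥ 1, Σ_{1 ≤ i < j ≤ t} (1/i)(1/j) · Π_{k=i+1}^{t}(1 − α/k) · Π_{l=j+1}^{t}(1 − α/l) · φ_{j−i} ≤ (6/(1−α)) · (1/(t+1))^α · Σ_{i=1}^{t} φ_i. -/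
/-! Bernoulli's inequality gives `1 - α/k ≤ (k/(k+1))^α`, so the damping product from `j + 1`
to `t` telescopes to at most `((j+1)/(t+1))^α`. Bounding the product from `i + 1` by `1` and
using `i ≤ j`, the coefficient of `φ (j - i)` is at most `2 (t+1)^(-α) i^(α-2)`. The shifts
`j - i` are distinct elements of `{1, …, t}`, so the double sum is at most
`2 (t+1)^(-α) (∑ i^(α-2)) ∑ φ`, and `∑_{i ≥ 1} i^(α-2) ≤ 1 + 1/(1-α) ≤ 2/(1-α)` by
telescoping against `i^(α-1)/(1-α)` (mean value theorem). -/

open Finset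

theorem prod_Ioc_div_add_one (j t : ℕ) (h : j ≤ t) :
    ∏ k ∈ Ioc j t, ((k : ℝ) / (k + 1)) = ((j : ℝ) + 1) / ((t : ℝ) + 1) := by
  induction t, h using Nat.le_induction with
  | base => simp [div_self (by positivity : (j : ℝ) + 1 ≠ 0)]
  | succ t hjt ih =>
    rw [prod_Ioc_succ_top (by omega), ih]
    push_cast
    field_simp

theorem one_sub_div_le_rpow_div_add_one {α x : ℝ} (hα₀ : 0 ≤ α) (hα₁ : α ≤ 1)
    (hx : 0 < x) :
    1 - α / x ≤ (x / (x + 1)) ^ α := by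
  rcases le_or_gt (1 - α / x) 0 with h | h
  · exact h.trans (by positivity)
  have bernoulli : ((x + 1) / x) ^ α ≤ 1 + α / x := by
    have := rpow_one_add_le_one_add_mul_self (s := 1 / x) (by linarith [one_div_pos.2 hx])
      hα₀ hα₁
    rwa [one_add_div hx.ne', mul_one_div] at this
  rw [← inv_div (x + 1) x, Real.inv_rpow (by positivity), le_inv_comm₀ h (by positivity)]
  refine bernoulli.trans ?_
  rw [← one_div, le_div_iff₀ (by positivity)]
  nlinarith [sq_nonneg (α / x)]

theorem one_sub_div_natCast_nonneg {α : ℝ} (hα : α ≤ 1) {k : ℕ} (hk : 1 ≤ k) :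
    0 ≤ 1 - α / (k : ℝ) :=
  sub_nonneg.2 (div_le_one_of_le₀ (hα.trans (by exact_mod_cast hk)) (by positivity))

theorem prod_Ioc_one_sub_div_le_rpow {α : ℝ} (hα₀ : 0 ≤ α) (hα₁ : α ≤ 1) {j t : ℕ}
    (hjt : j ≤ t) :
    ∏ k ∈ Ioc j t, (1 - α / (k : ℝ)) ≤ (((j : ℝ) + 1) / ((t : ℝ) + 1)) ^ α := by
  have hk : ∀ k ∈ Ioc j t, 1 ≤ k := fun k hk => by rw [mem_Ioc] at hk; omega
  calc ∏ k ∈ Ioc j t, (1 - α / (k : ℝ))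
      ≤ ∏ k ∈ Ioc j t, ((k : ℝ) / (k + 1)) ^ α :=
        prod_le_prod (fun k hk' => one_sub_div_natCast_nonneg hα₁ (hk k hk'))
          fun k hk' => one_sub_div_le_rpow_div_add_one hα₀ hα₁ (by exact_mod_cast hk k hk')
    _ = _ := by rw [Real.finsetProd_rpow _ _ fun k _ => by positivity, prod_Ioc_div_add_one j t hjt]

theorem rpow_natCast_add_one_div_le {α : ℝ} (hα : α ≤ 1) {i j : ℕ} (hi : 1 ≤ i)
    (hij : i ≤ j) :
    ((j : ℝ) + 1) ^ α / j ≤ 2 * (i : ℝ) ^ (α - 1) := by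
  have hi' : (1 : ℝ) ≤ i := by exact_mod_cast hi
  have hij' : (i : ℝ) ≤ j := by exact_mod_cast hij
  calc ((j : ℝ) + 1) ^ α / j = ((j : ℝ) + 1) ^ (α - 1) * ((j + 1) / j) := by
        rw [Real.rpow_sub_one (by positivity)]; field_simp
    _ ≤ (i : ℝ) ^ (α - 1) * 2 := by
        refine mul_le_mul (Real.rpow_le_rpow_of_nonpos (by positivity) (by linarith) (by linarith))
          ?_ (by positivity) (by positivity)
        rw [div_le_iff₀ (by linarith)]
        linarith
    _ = 2 * (i : ℝ) ^ (α - 1) := mul_comm _ _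

theorem one_div_mul_one_div_mul_prod_mul_prod_le {α : ℝ} (hα₀ : 0 ≤ α) (hα₁ : α ≤ 1)
    {i j t : ℕ} (hi : 1 ≤ i) (hij : i ≤ j) (hjt : j ≤ t) :
    1 / (i : ℝ) * (1 / (j : ℝ)) * (∏ k ∈ Ioc i t, (1 - α / (k : ℝ))) *
        (∏ l ∈ Ioc j t, (1 - α / (l : ℝ))) ≤
      2 * (1 / ((t : ℝ) + 1)) ^ α * (i : ℝ) ^ (α - 2) := by
  have hprod_nonneg : 0 ≤ ∏ l ∈ Ioc j t, (1 - α / (l : ℝ)) :=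
    prod_nonneg fun l hl => one_sub_div_natCast_nonneg hα₁ (by rw [mem_Ioc] at hl; omega)
  have hprod_le_one : ∏ k ∈ Ioc i t, (1 - α / (k : ℝ)) ≤ 1 :=
    (prod_Ioc_one_sub_div_le_rpow hα₀ hα₁ (hij.trans hjt)).trans <|
      Real.rpow_le_one (by positivity)
        (div_le_one_of_le₀ (by gcongr; exact_mod_cast hij.trans hjt) (by positivity)) hα₀
  calc 1 / (i : ℝ) * (1 / (j : ℝ)) * (∏ k ∈ Ioc i t, (1 - α / (k : ℝ))) *
        (∏ l ∈ Ioc j t, (1 - α / (l : ℝ)))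
      ≤ 1 / (i : ℝ) * (1 / (j : ℝ)) * 1 * (((j : ℝ) + 1) / ((t : ℝ) + 1)) ^ α := by
        gcongr
        exact prod_Ioc_one_sub_div_le_rpow hα₀ hα₁ hjt
    _ = 1 / (i : ℝ) * (((j : ℝ) + 1) ^ α / j) * (1 / ((t : ℝ) + 1)) ^ α := by
        rw [div_eq_mul_one_div ((j : ℝ) + 1), Real.mul_rpow (by positivity) (by positivity)]
        ring
    _ ≤ 1 / (i : ℝ) * (2 * (i : ℝ) ^ (α - 1)) * (1 / ((t : ℝ) + 1)) ^ α := by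
        gcongr
        exact rpow_natCast_add_one_div_le hα₁ hi hij
    _ = 2 * (1 / ((t : ℝ) + 1)) ^ α * (i : ℝ) ^ (α - 2) := by
        rw [show α - 2 = α - 1 - 1 by ring, Real.rpow_sub_one (by positivity) (α - 1)]
        ring

theorem mul_rpow_sub_two_le_sub {α x : ℝ} (hα : α ≤ 1) (hx : 0 < x) :
    (1 - α) * (x + 1) ^ (α - 2) ≤ x ^ (α - 1) - (x + 1) ^ (α - 1) := by
  have hderiv : ∀ y ∈ Set.Icc x (x + 1),
      HasDerivAt (fun y : ℝ => y ^ (α - 1)) ((α - 1) * y ^ (α - 1 - 1)) y :=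
    fun y hy => Real.hasDerivAt_rpow_const (Or.inl (hx.trans_le hy.1).ne')
  obtain ⟨c, ⟨hxc, hcx⟩, hc⟩ := exists_hasDerivAt_eq_slope _ _ (lt_add_one x)
    (fun y hy => (hderiv y hy).continuousAt.continuousWithinAt)
    fun y hy => hderiv y (Set.Ioo_subset_Icc_self hy)
  have hmono : (x + 1) ^ (α - 2) ≤ c ^ (α - 2) :=
    Real.rpow_le_rpow_of_nonpos (hx.trans hxc) hcx.le (by linarith)
  rw [add_sub_cancel_left, div_one, sub_sub, one_add_one_eq_two] at hc
  nlinarith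

theorem sum_Icc_rpow_sub_two_le_of_one_le {α : ℝ} (hα : α < 1) {t : ℕ} (ht : 1 ≤ t) :
    ∑ i ∈ Icc 1 t, (i : ℝ) ^ (α - 2) ≤ 1 + (1 - (t : ℝ) ^ (α - 1)) / (1 - α) := by
  have hα' : 0 < 1 - α := by linarith
  induction t, ht using Nat.le_induction with
  | base => simp
  | succ n hn ih =>
    have step : ((n : ℝ) + 1) ^ (α - 2) ≤
        (n : ℝ) ^ (α - 1) / (1 - α) - ((n : ℝ) + 1) ^ (α - 1) / (1 - α) := by
      rw [← sub_div, le_div_iff₀' hα']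
      exact mul_rpow_sub_two_le_sub hα.le (by positivity)
    rw [sum_Icc_succ_top (by omega), Nat.cast_add_one]
    rw [sub_div] at ih ⊢
    linarith

theorem sum_Icc_rpow_sub_two_le {α : ℝ} (hα₀ : 0 ≤ α) (hα₁ : α < 1) (t : ℕ) :
    ∑ i ∈ Icc 1 t, (i : ℝ) ^ (α - 2) ≤ 2 / (1 - α) := by
  rcases Nat.eq_zero_or_pos t with rfl | ht
  · simp only [Icc_eq_empty_of_lt zero_lt_one, sum_empty]
    exact div_nonneg zero_le_two (by linarith)
  have hα' : 0 < 1 - α := by linarith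
  calc ∑ i ∈ Icc 1 t, (i : ℝ) ^ (α - 2) ≤ 1 + (1 - (t : ℝ) ^ (α - 1)) / (1 - α) :=
        sum_Icc_rpow_sub_two_le_of_one_le hα₁ ht
    _ ≤ 1 / (1 - α) + 1 / (1 - α) := by
        gcongr
        · rw [le_div_iff₀ hα']; linarith
        · exact sub_le_self _ (by positivity)
    _ = 2 / (1 - α) := by ring

theorem sum_Ioc_sub_le_sum_Icc {M : Type*} [AddCommMonoid M] [PartialOrder M]
    [IsOrderedAddMonoid M] {φ : ℕ → M} (hφ : ∀ m, 1 ≤ m → 0 ≤ φ m) (i t : ℕ) :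
    ∑ j ∈ Ioc i t, φ (j - i) ≤ ∑ m ∈ Icc 1 t, φ m := by
  calc ∑ j ∈ Ioc i t, φ (j - i) = ∑ m ∈ Icc 1 (t - i), φ m :=
        sum_nbij' (· - i) (· + i) (fun j hj => by simp only [mem_Ioc, mem_Icc] at hj ⊢; omega)
          (fun m hm => by simp only [mem_Ioc, mem_Icc] at hm ⊢; omega)
          (fun j hj => by simp only [mem_Ioc] at hj; omega)
          (fun m _ => Nat.add_sub_cancel m i) fun _ _ => rfl
    _ ≤ ∑ m ∈ Icc 1 t, φ m :=
        sum_le_sum_of_subset_of_nonneg (Icc_subset_Icc_right (Nat.sub_le t i))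
          fun m hm _ => hφ m (mem_Icc.1 hm).1

theorem sum_sum_Ioc_mul_sub_le {R : Type*} [CommSemiring R] [PartialOrder R] [IsOrderedRing R]
    {w φ : ℕ → R} (hw : ∀ i, 0 ≤ w i) (hφ : ∀ m, 1 ≤ m → 0 ≤ φ m) (t : ℕ) :
    ∑ i ∈ Icc 1 t, ∑ j ∈ Ioc i t, w i * φ (j - i) ≤
      (∑ i ∈ Icc 1 t, w i) * ∑ m ∈ Icc 1 t, φ m := by
  rw [sum_mul]
  gcongr with i
  rw [← mul_sum]
  exact mul_le_mul_of_nonneg_left (sum_Ioc_sub_le_sum_Icc hφ i t) (hw i)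

theorem pair_sum_mixing_bound_theta_one_general
    (α : ℝ) (hα : α ∈ Set.Ioo (0 : ℝ) 1)
    (φ : ℕ → ℝ) (hφ : ∀ m : ℕ, 1 ≤ m → 0 ≤ φ m)
    (t : ℕ) :
    ∑ i ∈ Finset.Icc 1 t, ∑ j ∈ Finset.Ioc i t,
        (1 / (i : ℝ)) * (1 / (j : ℝ)) *
          (∏ k ∈ Finset.Ioc i t, (1 - α / (k : ℝ))) *
          (∏ l ∈ Finset.Ioc j t, (1 - α / (l : ℝ))) * φ (j - i) ≤
      6 / (1 - α) * (1 / ((t : ℝ) + 1)) ^ α * ∑ i ∈ Finset.Icc 1 t, φ i := by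
  obtain ⟨hα₀, hα₁⟩ := hα
  set c := (1 / ((t : ℝ) + 1)) ^ α
  have hΦ : 0 ≤ ∑ i ∈ Icc 1 t, φ i := sum_nonneg fun i hi => hφ i (mem_Icc.1 hi).1
  calc _ ≤ ∑ i ∈ Icc 1 t, ∑ j ∈ Ioc i t, 2 * c * (i : ℝ) ^ (α - 2) * φ (j - i) := by
        refine sum_le_sum fun i hi => sum_le_sum fun j hj => ?_
        simp only [mem_Icc, mem_Ioc] at hi hj
        exact mul_le_mul_of_nonneg_right
          (one_div_mul_one_div_mul_prod_mul_prod_le hα₀.le hα₁.le hi.1 hj.1.le hj.2)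
          (hφ (j - i) (by omega))
    _ ≤ (∑ i ∈ Icc 1 t, 2 * c * (i : ℝ) ^ (α - 2)) * ∑ i ∈ Icc 1 t, φ i :=
        sum_sum_Ioc_mul_sub_le (fun i => by positivity) hφ t
    _ ≤ 2 * c * (2 / (1 - α)) * ∑ i ∈ Icc 1 t, φ i := by
        rw [← mul_sum]
        gcongr
        exact sum_Icc_rpow_sub_two_le hα₀.le hα₁ t
    _ = 4 / (1 - α) * c * ∑ i ∈ Icc 1 t, φ i := by ring
    _ ≤ 6 / (1 - α) * c * ∑ i ∈ Icc 1 t, φ i := by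
        have : 0 < 1 - α := by linarith
        gcongr
        norm_num

theorem pair_sum_mixing_bound_theta_one
    (α : ℝ) (hα : α ∈ Set.Ioo (0 : ℝ) 1)
    (φ : ℕ → ℝ) (hφ : ∀ m : ℕ, 1 ≤ m → 0 ≤ φ m)
    (t : ℕ) (ht : 1 ≤ t) :
    ∑ i ∈ Finset.Icc 1 t, ∑ j ∈ Finset.Ioc i t,
        (1 / (i : ℝ)) * (1 / (j : ℝ)) *
          (∏ k ∈ Finset.Ioc i t, (1 - α / (k : ℝ))) *
          (∏ l ∈ Finset.Ioc j t, (1 - α / (l : ℝ))) * φ (j - i) ≤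
      6 / (1 - α) * (1 / ((t : ℝ) + 1)) ^ α * ∑ i ∈ Finset.Icc 1 t, φ i :=
  pair_sum_mixing_bound_theta_one_general α hα φ hφ t
end

section
/- Let θ = 1 and for k ≥ 1 set γ_k = 1/(η k). Suppose A_1, …, A_{t−1} are bounded self-adjoint linear operators on W with κ‖w‖² ≤ ⟨A_k w, w⟩ ≤ η‖w‖² for all w ∈ W and each k, where 0 < κ ≤ η, and set α := κ/η ∈ (0,1]. Then for every v ∈ W, ‖(Π_{k=1}^{t−1}(Id − γ_k A_k)) v‖ ≤ (1/t)^α·‖v‖. -/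
open scoped RealInnerProductSpace

/-- If `B` is symmetric with `0 ≤ ⟪Bz,z⟫ ≤ N‖z‖²`, then `‖Bw‖² ≤ N⟪Bw,w⟫`. -/
lemma aux_pos_op_sq {W : Type*} [NormedAddCommGroup W] [InnerProductSpace ℝ W]
    (B : W →L[ℝ] W) (hsym : ∀ x y : W, ⟪B x, y⟫ = ⟪x, B y⟫) (N : ℝ) (hN : 0 ≤ N)
    (h0 : ∀ z : W, 0 ≤ ⟪B z, z⟫) (h1 : ∀ z : W, ⟪B z, z⟫ ≤ N * ‖z‖ ^ 2)
    (w : W) : ‖B w‖ ^ 2 ≤ N * ⟪B w, w⟫ := by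
  have h2 : ⟪B (B w), w⟫ = ⟪B w, B w⟫ := by
    rw [hsym (B w) w, real_inner_comm]
  have h2' : ⟪B w, B (B w)⟫ = ⟪B (B w), B w⟫ := real_inner_comm _ _
  have h4 : ⟪w, B w⟫ = ⟪B w, w⟫ := real_inner_comm _ _
  rcases hN.eq_or_lt with h | h
  · have hz : ∀ z : W, ⟪B z, z⟫ = 0 := fun z =>
      le_antisymm (by simpa [← h] using h1 z) (h0 z)
    have hexp : ⟪B (w + B w), w + B w⟫ = ⟪B w, w⟫ + 2 * ⟪B w, B w⟫ + ⟪B (B w), B w⟫ := by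
      simp only [map_add, inner_add_left, inner_add_right]
      rw [h2]; ring
    have h6 := hz (w + B w)
    rw [hexp, hz w, hz (B w)] at h6
    have h7 : ⟪B w, B w⟫ = 0 := by linarith
    rw [real_inner_self_eq_norm_sq] at h7
    rw [h7, ← h]; simp
  · have hNne : N ≠ 0 := h.ne'
    have hpos := h0 (w - (1 / N) • B w)
    have hexp : ⟪B (w - (1 / N) • B w), w - (1 / N) • B w⟫
        = ⟪B w, w⟫ - (2 / N) * ⟪B w, B w⟫ + (1 / N) ^ 2 * ⟪B (B w), B w⟫ := by
      simp only [map_sub, map_smul, inner_sub_left, inner_sub_right,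
        real_inner_smul_left, real_inner_smul_right]
      rw [h2]
      ring
    rw [hexp] at hpos
    set a := ⟪B w, w⟫
    set x := ⟪B w, B w⟫ with hx
    set y := ⟪B (B w), B w⟫
    have hBB : y ≤ N * ‖B w‖ ^ 2 := h1 (B w)
    have hn : x = ‖B w‖ ^ 2 := real_inner_self_eq_norm_sq _
    rw [← hn] at hBB ⊢
    have hpos' : 0 ≤ N ^ 2 * a - 2 * N * x + y := by
      have h8 := mul_nonneg (sq_nonneg N) hpos
      have h9 : N ^ 2 * (a - 2 / N * x + (1 / N) ^ 2 * y) = N ^ 2 * a - 2 * N * x + y := by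
        field_simp
      linarith [h9 ▸ h8]
    nlinarith

lemma aux_scalar (α k : ℝ) (hα0 : 0 < α) (hα1 : α ≤ 1) (hk : 1 ≤ k) :
    (1 - α / k) * (1 / k) ^ α ≤ (1 / (k + 1)) ^ α := by
  have hkpos : (0 : ℝ) < k := lt_of_lt_of_le one_pos hk
  have hk1pos : (0 : ℝ) < k + 1 := by linarith
  have h3 : (0 : ℝ) < (k / (k + 1)) ^ α := Real.rpow_pos_of_pos (by positivity) _
  have key : 1 - α / k ≤ (k / (k + 1)) ^ α := by
    rcases le_or_gt (1 - α / k) 0 with hneg | hpos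
    · linarith
    · have hb : (1 + 1 / k) ^ α ≤ 1 + α * (1 / k) :=
        rpow_one_add_le_one_add_mul_self (by linarith [(one_div_pos.2 hkpos).le]) hα0.le hα1
      have h2 : (1 - α / k) * (1 + 1 / k) ^ α ≤ 1 := by
        calc (1 - α / k) * (1 + 1 / k) ^ α
            ≤ (1 - α / k) * (1 + α * (1 / k)) := mul_le_mul_of_nonneg_left hb hpos.le
          _ = 1 - (α * (1 / k)) ^ 2 := by ring
          _ ≤ 1 := by nlinarith [sq_nonneg (α * (1 / k))]
      have hprod : (1 + 1 / k) ^ α * (k / (k + 1)) ^ α = 1 := by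
        rw [← Real.mul_rpow (by positivity) (by positivity),
          show (1 + 1 / k) * (k / (k + 1)) = 1 by field_simp]
        exact Real.one_rpow _
      calc 1 - α / k = (1 - α / k) * ((1 + 1 / k) ^ α * (k / (k + 1)) ^ α) := by
            rw [hprod]; ring
        _ = ((1 - α / k) * (1 + 1 / k) ^ α) * (k / (k + 1)) ^ α := by ring
        _ ≤ 1 * (k / (k + 1)) ^ α := mul_le_mul_of_nonneg_right h2 h3.le
        _ = _ := one_mul _
  have h4 : (0 : ℝ) ≤ (1 / k) ^ α := (Real.rpow_pos_of_pos (by positivity) _).le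
  calc (1 - α / k) * (1 / k) ^ α ≤ (k / (k + 1)) ^ α * (1 / k) ^ α :=
        mul_le_mul_of_nonneg_right key h4
    _ = (1 / (k + 1)) ^ α := by
        rw [← Real.mul_rpow (by positivity) (by positivity),
          show (k / (k + 1)) * (1 / k) = 1 / (k + 1) by field_simp]

lemma aux_step {W : Type*} [NormedAddCommGroup W] [InnerProductSpace ℝ W]
    (κ η : ℝ) (hκ : 0 < κ) (hκη : κ ≤ η) (A : W →L[ℝ] W)
    (hsym : ∀ x y : W, ⟪A x, y⟫ = ⟪x, A y⟫)
    (hlb : ∀ w : W, κ * ‖w‖ ^ 2 ≤ ⟪A w, w⟫)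
    (hub : ∀ w : W, ⟪A w, w⟫ ≤ η * ‖w‖ ^ 2)
    (k : ℝ) (hk : 1 ≤ k) (w : W) :
    ‖w - (1 / (η * k)) • A w‖ ≤ (1 - κ / (η * k)) * ‖w‖ := by
  have hη : 0 < η := lt_of_lt_of_le hκ hκη
  have hs : 0 < η * k := by nlinarith
  have hηk : η ≤ η * k := by nlinarith
  set B : W →L[ℝ] W := A - κ • ContinuousLinearMap.id ℝ W with hB
  have hBapp : ∀ z : W, B z = A z - κ • z := fun z => by simp [hB]
  have hsymB : ∀ x y : W, ⟪B x, y⟫ = ⟪x, B y⟫ := by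
    intro x y
    simp only [hBapp, inner_sub_left, inner_sub_right, real_inner_smul_left,
      real_inner_smul_right, hsym]
  have h0B : ∀ z : W, 0 ≤ ⟪B z, z⟫ := by
    intro z
    rw [hBapp z, inner_sub_left, real_inner_smul_left, real_inner_self_eq_norm_sq]
    linarith [hlb z]
  have h1B : ∀ z : W, ⟪B z, z⟫ ≤ (η - κ) * ‖z‖ ^ 2 := by
    intro z
    rw [hBapp z, inner_sub_left, real_inner_smul_left, real_inner_self_eq_norm_sq]
    linarith [hub z]
  have key := aux_pos_op_sq B hsymB (η - κ) (by linarith) h0B h1B w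
  rw [hBapp w, inner_sub_left, real_inner_smul_left, real_inner_self_eq_norm_sq] at key
  have hexpand : ‖A w - κ • w‖ ^ 2
      = ‖A w‖ ^ 2 - 2 * κ * ⟪A w, w⟫ + κ ^ 2 * ‖w‖ ^ 2 := by
    rw [norm_sub_sq_real, real_inner_smul_right, norm_smul, Real.norm_eq_abs,
      abs_of_pos hκ, mul_pow]
    ring
  rw [hexpand] at key
  set a := ⟪A w, w⟫ with ha
  set n := ‖w‖ ^ 2 with hn
  set m := ‖A w‖ ^ 2 with hm
  set s := η * k with hsdef
  have hL : ‖w - (1 / s) • A w‖ ^ 2 = n - 2 / s * a + (1 / s) ^ 2 * m := by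
    rw [norm_sub_sq_real, real_inner_smul_right, norm_smul, Real.norm_eq_abs,
      abs_of_pos (by positivity : (0:ℝ) < 1 / s), mul_pow,
      show ⟪w, A w⟫ = a from by rw [ha, real_inner_comm]]
    ring
  have hlbw : κ * n ≤ a := hlb w
  have hnum : 0 ≤ (2 * s * a - 2 * s * κ * n + κ ^ 2 * n) - m := by
    nlinarith [mul_nonneg (show (0:ℝ) ≤ 2 * s - η - κ by linarith)
      (show (0:ℝ) ≤ a - κ * n by linarith)]
  have hdiff : ((1 - κ / s) * ‖w‖) ^ 2 - (n - 2 / s * a + (1 / s) ^ 2 * m)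
      = ((2 * s * a - 2 * s * κ * n + κ ^ 2 * n) - m) / s ^ 2 := by
    rw [mul_pow, ← hn]
    field_simp
    ring
  have hsq : ‖w - (1 / s) • A w‖ ^ 2 ≤ ((1 - κ / s) * ‖w‖) ^ 2 := by
    have hdn : 0 ≤ ((2 * s * a - 2 * s * κ * n + κ ^ 2 * n) - m) / s ^ 2 :=
      div_nonneg hnum (sq_nonneg s)
    rw [hL]; linarith
  have hR : 0 ≤ (1 - κ / s) * ‖w‖ := by
    apply mul_nonneg _ (norm_nonneg w)
    have : κ / s ≤ 1 := (div_le_one hs).2 (by linarith)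
    linarith
  calc ‖w - (1 / s) • A w‖ = Real.sqrt (‖w - (1 / s) • A w‖ ^ 2) :=
        (Real.sqrt_sq (norm_nonneg _)).symm
    _ ≤ Real.sqrt (((1 - κ / s) * ‖w‖) ^ 2) := Real.sqrt_le_sqrt hsq
    _ = (1 - κ / s) * ‖w‖ := Real.sqrt_sq hR

theorem operator_product_contraction_theta_one
    {W : Type*} [NormedAddCommGroup W] [InnerProductSpace ℝ W] [CompleteSpace W]
    (κ η : ℝ) (hκ : 0 < κ) (hκη : κ ≤ η)
    (t : ℕ) (ht : 1 ≤ t)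
    (A : ℕ → W →L[ℝ] W)
    (hsa : ∀ k, 1 ≤ k → k < t → IsSelfAdjoint (A k))
    (hlb : ∀ k, 1 ≤ k → k < t → ∀ w : W, κ * ‖w‖ ^ 2 ≤ ⟪A k w, w⟫)
    (hub : ∀ k, 1 ≤ k → k < t → ∀ w : W, ⟪A k w, w⟫ ≤ η * ‖w‖ ^ 2)
    (v : W) (u : ℕ → W) (hu1 : u 1 = v)
    (hrec : ∀ k, 1 ≤ k → k < t →
      u (k + 1) = u k - (1 / (η * (k : ℝ))) • A k (u k)) :
    ‖u t‖ ≤ (1 / (t : ℝ)) ^ (κ / η) * ‖v‖ := by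
  have hη : 0 < η := lt_of_lt_of_le hκ hκη
  have hα0 : 0 < κ / η := div_pos hκ hη
  have hα1 : κ / η ≤ 1 := (div_le_one hη).2 hκη
  have main : ∀ k : ℕ, 1 ≤ k → k ≤ t → ‖u k‖ ≤ (1 / (k : ℝ)) ^ (κ / η) * ‖v‖ := by
    intro k hk
    induction k, hk using Nat.le_induction with
    | base => intro _; simp [hu1]
    | succ k hk ih =>
      intro hkt
      have hklt : k < t := hkt
      have hik := ih hklt.le
      have hkR : (1 : ℝ) ≤ (k : ℝ) := by exact_mod_cast hk
      have hkpos : (0 : ℝ) < (k : ℝ) := by linarith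
      have hsymk : ∀ x y : W, ⟪A k x, y⟫ = ⟪x, A k y⟫ := by
        intro x y
        simpa using (hsa k hk hklt).isSymmetric x y
      have step := aux_step κ η hκ hκη (A k) hsymk
        (hlb k hk hklt) (hub k hk hklt) (k : ℝ) hkR (u k)
      have hfac : 1 - κ / (η * (k : ℝ)) = 1 - (κ / η) / (k : ℝ) := by rw [div_div]
      have hnonneg : 0 ≤ 1 - (κ / η) / (k : ℝ) := by
        have h9 : (κ / η) / (k : ℝ) ≤ 1 := (div_le_one hkpos).2 (by linarith)
        linarith
      rw [hrec k hk hklt]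
      calc ‖u k - (1 / (η * (k : ℝ))) • A k (u k)‖
          ≤ (1 - κ / (η * (k : ℝ))) * ‖u k‖ := step
        _ = (1 - (κ / η) / (k : ℝ)) * ‖u k‖ := by rw [hfac]
        _ ≤ (1 - (κ / η) / (k : ℝ)) * ((1 / (k : ℝ)) ^ (κ / η) * ‖v‖) :=
            mul_le_mul_of_nonneg_left hik hnonneg
        _ = ((1 - (κ / η) / (k : ℝ)) * (1 / (k : ℝ)) ^ (κ / η)) * ‖v‖ := by ring
        _ ≤ (1 / ((k : ℝ) + 1)) ^ (κ / η) * ‖v‖ :=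
            mul_le_mul_of_nonneg_right (aux_scalar (κ / η) (k : ℝ) hα0 hα1 hkR)
              (norm_nonneg v)
        _ = (1 / ((k + 1 : ℕ) : ℝ)) ^ (κ / η) * ‖v‖ := by push_cast; ring_nf
  exact main t ht le_rfl
end

section
/- Let α ∈ (0, 1]. Then for every t ∈ ℕ, the quantity ψ_1(t+1, α) := Σ_{i=1}^{t} (1/i²) · (Π_{k=i+1}^{t}(1 − α/k))² satisfies: ψ_1(t+1, α) ≤ (4/(1−2α))·(t+1)^{−2α} if α ∈ (0, 1/2); ψ_1(t+1, α) ≤ 4·(t+1)^{−1}·ln(t+1) if α = 1/2; ψ_1(t+1, α) ≤ (6/(2α−1))·(t+1)^{−1} if α ∈ (1/2, 1); and ψ_1(t+1, α) ≤ 6·(t+1)^{−1} if α = 1. -/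
/-!
Each factor satisfies `1 - α / k ≤ exp (-α / k) ≤ (k / (k + 1)) ^ α`, so the product telescopes to
at most `((i + 1) / (t + 1)) ^ α`. As `(i + 1) / i ≤ 2`, this gives
`ψ ≤ 4 (t + 1) ^ (-2α) ∑_{i=1}^t (i + 1) ^ (2α - 2)`, and the sum of the decreasing function
`x ↦ x ^ (2α - 2)` is at most `∫_1^{t+1} x ^ (2α - 2) dx`. The three regimes of the bound are the
cases `2α - 2 < -1`, `= -1` and `> -1` of this integral.
-/

open Finset Real

lemma one_sub_div_le_div_add_one_rpow {α k : ℝ} (hα : 0 ≤ α) (hk : 0 < k) :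
    1 - α / k ≤ (k / (k + 1)) ^ α := by
  have hexp : exp (-(1 / k)) ≤ k / (k + 1) := by
    rw [exp_neg, inv_le_comm₀ (exp_pos _) (by positivity), inv_div, add_div, div_self hk.ne',
      add_comm]
    exact add_one_le_exp _
  calc 1 - α / k ≤ exp (-(α / k)) := by linarith [add_one_le_exp (-(α / k))]
    _ = exp (-(1 / k)) ^ α := by rw [← exp_mul]; ring_nf
    _ ≤ (k / (k + 1)) ^ α := rpow_le_rpow (exp_nonneg _) hexp hα

lemma prod_Ioc_one_sub_div_nonneg {α : ℝ} {i : ℕ} (hαi : α ≤ i + 1) (t : ℕ) :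
    0 ≤ ∏ k ∈ Ioc i t, (1 - α / (k : ℝ)) :=
  prod_nonneg fun k hk ↦ sub_nonneg.2 <| div_le_one_of_le₀
    (hαi.trans <| by exact_mod_cast (mem_Ioc.1 hk).1) (Nat.cast_nonneg k)

lemma prod_Ioc_one_sub_div_le {α : ℝ} (hα : 0 ≤ α) {i t : ℕ} (hαi : α ≤ i + 1) (hit : i ≤ t) :
    ∏ k ∈ Ioc i t, (1 - α / (k : ℝ)) ≤ (((i : ℝ) + 1) / (t + 1)) ^ α := by
  induction t, hit using Nat.le_induction with
  | base => rw [Ioc_self, prod_empty, div_self (by positivity), one_rpow]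
  | succ t hit ih =>
    rw [prod_Ioc_succ_top hit]
    push_cast
    have hfactor : 0 ≤ 1 - α / ((t : ℝ) + 1) := by
      rw [sub_nonneg]
      exact div_le_one_of_le₀ (hαi.trans <| by exact_mod_cast Nat.succ_le_succ hit) (by positivity)
    calc _ ≤ (((i : ℝ) + 1) / (t + 1)) ^ α * (1 - α / ((t : ℝ) + 1)) :=
          mul_le_mul_of_nonneg_right ih hfactor
      _ ≤ (((i : ℝ) + 1) / (t + 1)) ^ α * (((t : ℝ) + 1) / (t + 1 + 1)) ^ α := by
          gcongr
          exact one_sub_div_le_div_add_one_rpow hα (by positivity)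
      _ = (((i : ℝ) + 1) / (t + 1 + 1)) ^ α := by
          rw [← mul_rpow (by positivity) (by positivity)]
          congr 1
          field_simp

lemma psi_summand_le {α : ℝ} (hα0 : 0 ≤ α) (hα2 : α ≤ 2) {i t : ℕ} (hi : 1 ≤ i) (hit : i ≤ t) :
    1 / (i : ℝ) ^ 2 * (∏ k ∈ Ioc i t, (1 - α / (k : ℝ))) ^ 2
      ≤ 4 * ((t : ℝ) + 1) ^ (-(2 * α)) * ((i : ℝ) + 1) ^ (2 * α - 2) := by
  have hi0 : (0 : ℝ) < i := by exact_mod_cast hi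
  have hαi : α ≤ i + 1 := by linarith [(show (1 : ℝ) ≤ i by exact_mod_cast hi)]
  have hsq : (∏ k ∈ Ioc i t, (1 - α / (k : ℝ))) ^ 2 ≤ (((i : ℝ) + 1) / (t + 1)) ^ (2 * α) := by
    rw [mul_comm, rpow_mul (by positivity), rpow_two]
    exact pow_le_pow_left₀ (prod_Ioc_one_sub_div_nonneg hαi t)
      (prod_Ioc_one_sub_div_le hα0 hαi hit) 2
  have hratio : ((i : ℝ) + 1) / i ≤ 2 := by
    rw [div_le_iff₀ hi0]; linarith [(show (1 : ℝ) ≤ i by exact_mod_cast hi)]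
  calc _ ≤ 1 / (i : ℝ) ^ 2 * (((i : ℝ) + 1) / (t + 1)) ^ (2 * α) := by gcongr
    _ = (((i : ℝ) + 1) / i) ^ 2 * ((t : ℝ) + 1) ^ (-(2 * α)) * ((i : ℝ) + 1) ^ (2 * α - 2) := by
      rw [div_rpow (by positivity) (by positivity), rpow_neg (by positivity),
        rpow_sub (by positivity), rpow_two]
      field_simp
    _ ≤ 2 ^ 2 * ((t : ℝ) + 1) ^ (-(2 * α)) * ((i : ℝ) + 1) ^ (2 * α - 2) := by gcongr
    _ = _ := by norm_num

lemma sum_Icc_add_one_rpow_le_integral {r : ℝ} (hr : r ≤ 0) (t : ℕ) :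
    ∑ i ∈ Icc 1 t, ((i : ℝ) + 1) ^ r ≤ ∫ x in (1 : ℝ)..(t + 1), x ^ r := by
  have h := AntitoneOn.sum_le_integral_Ico (f := fun x : ℝ ↦ x ^ r) (a := 1) (b := t + 1)
    (by omega) fun x hx y _ hxy ↦ rpow_le_rpow_of_nonpos (by simp at hx; linarith [hx.1]) hxy hr
  simpa [Finset.Ico_add_one_right_eq_Icc] using h

lemma psi_le_integral {α : ℝ} (hα0 : 0 ≤ α) (hα1 : α ≤ 1) (t : ℕ) :
    ∑ i ∈ Icc 1 t, 1 / (i : ℝ) ^ 2 * (∏ k ∈ Ioc i t, (1 - α / (k : ℝ))) ^ 2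
      ≤ 4 * ((t : ℝ) + 1) ^ (-(2 * α)) * ∫ x in (1 : ℝ)..(t + 1), x ^ (2 * α - 2) := by
  calc _ ≤ ∑ i ∈ Icc 1 t, 4 * ((t : ℝ) + 1) ^ (-(2 * α)) * ((i : ℝ) + 1) ^ (2 * α - 2) :=
        sum_le_sum fun i hi ↦ psi_summand_le hα0 (by linarith) (mem_Icc.1 hi).1 (mem_Icc.1 hi).2
    _ ≤ _ := by
        rw [← mul_sum]
        gcongr
        exact sum_Icc_add_one_rpow_le_integral (by linarith) t

lemma integral_one_rpow_le_of_lt_neg_one {r b : ℝ} (hr : r < -1) (hb : 1 ≤ b) :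
    ∫ x in (1 : ℝ)..b, x ^ r ≤ 1 / (-r - 1) := by
  have h0 : (0 : ℝ) ∉ Set.uIcc 1 b := by
    rw [Set.uIcc_of_le hb]; exact fun h ↦ by linarith [h.1]
  rw [integral_rpow (Or.inr ⟨hr.ne, h0⟩), one_rpow, ← neg_div_neg_eq, neg_sub, neg_add']
  gcongr
  · linarith
  · linarith [rpow_nonneg (by linarith : (0 : ℝ) ≤ b) (r + 1)]

lemma integral_one_rpow_neg_one {b : ℝ} (hb : 0 < b) :
    ∫ x in (1 : ℝ)..b, x ^ (-1 : ℝ) = log b := by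
  simp_rw [rpow_neg_one]
  rw [integral_inv_of_pos one_pos hb, div_one]

lemma integral_one_rpow_le_of_neg_one_lt {r b : ℝ} (hr : -1 < r) :
    ∫ x in (1 : ℝ)..b, x ^ r ≤ b ^ (r + 1) / (r + 1) := by
  rw [integral_rpow (Or.inl hr), one_rpow]
  gcongr
  · linarith
  · linarith

theorem psi_one_bound
    (α : ℝ) (hα : α ∈ Set.Ioc (0 : ℝ) 1) (t : ℕ)
    (ψ : ℝ)
    (hψ : ψ = ∑ i ∈ Finset.Icc 1 t, (1 / (i : ℝ) ^ 2) *
        (∏ k ∈ Finset.Ioc i t, (1 - α / (k : ℝ))) ^ 2) :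
    (α < 1/2 → ψ ≤ 4 / (1 - 2 * α) * ((t : ℝ) + 1) ^ (-(2 * α))) ∧
    (α = 1/2 → ψ ≤ 4 * ((t : ℝ) + 1)⁻¹ * Real.log ((t : ℝ) + 1)) ∧
    (1/2 < α → α < 1 → ψ ≤ 6 / (2 * α - 1) * ((t : ℝ) + 1)⁻¹) ∧
    (α = 1 → ψ ≤ 6 * ((t : ℝ) + 1)⁻¹) := by
  obtain ⟨hα0, hα1⟩ := hα
  have hT : (1 : ℝ) ≤ t + 1 := by linarith [(Nat.cast_nonneg t : (0 : ℝ) ≤ t)]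
  have key := hψ ▸ psi_le_integral hα0.le hα1 t
  have hB : 0 ≤ 4 * ((t : ℝ) + 1) ^ (-(2 * α)) := by positivity
  have hsup (h : 1 / 2 < α) : ψ ≤ 4 / (2 * α - 1) * ((t : ℝ) + 1)⁻¹ := by
    calc ψ ≤ 4 * ((t : ℝ) + 1) ^ (-(2 * α)) * (((t : ℝ) + 1) ^ (2 * α - 2 + 1) / (2 * α - 2 + 1)) :=
          key.trans <| mul_le_mul_of_nonneg_left
            (integral_one_rpow_le_of_neg_one_lt (by linarith)) hB
      _ = 4 / (2 * α - 1) * ((t : ℝ) + 1)⁻¹ := by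
          rw [mul_assoc, ← mul_div_assoc, ← rpow_add (by linarith), ← rpow_neg_one]
          ring_nf
  refine ⟨fun h ↦ ?_, fun h ↦ ?_, fun h _ ↦ (hsup h).trans ?_, fun h ↦ (hsup (by linarith)).trans ?_⟩
  · calc ψ ≤ 4 * ((t : ℝ) + 1) ^ (-(2 * α)) * (1 / (-(2 * α - 2) - 1)) :=
          key.trans <| mul_le_mul_of_nonneg_left
            (integral_one_rpow_le_of_lt_neg_one (by linarith) hT) hB
      _ = _ := by ring_nf
  · subst h
    rw [show (2 * (1 / 2) - 2 : ℝ) = -1 by norm_num, integral_one_rpow_neg_one (by linarith),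
      show (-(2 * (1 / 2)) : ℝ) = -1 by norm_num, rpow_neg_one] at key
    exact key
  · gcongr
    · linarith
    · norm_num
  · subst h
    gcongr
    norm_num
end

section
/- Let t ∈ ℕ, t ≥ 1, and α ∈ (0, 1). Then Σ_{i=1}^{t} (1/i²)·((i+1)/(t+1))^α ≤ (6/(1−α))·(t+1)^{−α}. -/
open Finset in
private lemma aux_sum_rpow (t : ℕ) (ht : 1 ≤ t) (α : ℝ) (hα0 : 0 < α) (hα1 : α < 1) :
    ∑ i ∈ Finset.Icc 1 t, (i : ℝ) ^ (α - 2) ≤ 1 + 1 / (1 - α) := by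
  have h1α : (0:ℝ) < 1 - α := by linarith
  have hsplit : Finset.Icc 1 t = insert 1 (Finset.Icc 2 t) := by
    ext x; simp [Finset.mem_Icc, Finset.mem_insert]; omega
  rw [hsplit, Finset.sum_insert (by simp)]
  simp only [Nat.cast_one, Real.one_rpow]
  gcongr
  have hre : ∑ i ∈ Finset.Icc 2 t, (i : ℝ) ^ (α - 2)
      = ∑ i ∈ Finset.Ico 1 t, ((i + 1 : ℕ) : ℝ) ^ (α - 2) := by
    rw [show Finset.Icc 2 t = Finset.map (addRightEmbedding 1) (Finset.Ico 1 t) by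
      rw [Finset.map_add_right_Ico]; exact (Finset.Ico_add_one_right_eq_Icc 2 t).symm, Finset.sum_map]
    rfl
  have hanti : AntitoneOn (fun x : ℝ => x ^ (α - 2)) (Set.Icc (1:ℕ) (t:ℕ)) := by
    intro x hx y hy hxy
    exact Real.rpow_le_rpow_of_nonpos (by simpa using lt_of_lt_of_le one_pos (by exact_mod_cast hx.1)) hxy (by linarith)
  have hint := AntitoneOn.sum_le_integral_Ico ht hanti
  rw [hre]
  refine hint.trans ?_
  have htR : (1:ℝ) ≤ (t:ℝ) := by exact_mod_cast ht
  rw [integral_rpow (Or.inr ⟨by intro h; linarith, by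
      simp only [Set.mem_uIcc]; push_cast
      rintro (⟨h1, h2⟩ | ⟨h1, h2⟩) <;> linarith⟩)]
  have h1 : ((1:ℕ):ℝ) ^ (α - 2 + 1) = 1 := by norm_num
  rw [h1]
  have ht0 : (0:ℝ) ≤ (t:ℝ) ^ (α - 2 + 1) := Real.rpow_nonneg (by positivity) _
  have heq : ((t:ℝ) ^ (α - 2 + 1) - 1) / (α - 2 + 1)
      = (1 - (t:ℝ) ^ (α - 2 + 1)) / (1 - α) := by
    rw [div_eq_div_iff (by linarith) (by linarith)]; ring
  rw [heq]
  gcongr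
  linarith

theorem sum_inv_sq_ratio_pow_bound
    (t : ℕ) (ht : 1 ≤ t) (α : ℝ) (hα : α ∈ Set.Ioo (0 : ℝ) 1) :
    ∑ i ∈ Finset.Icc 1 t, (1 / (i : ℝ) ^ 2) * (((i : ℝ) + 1) / ((t : ℝ) + 1)) ^ α ≤
      6 / (1 - α) * ((t : ℝ) + 1) ^ (-α) := by
  obtain ⟨hα0, hα1⟩ := hα
  have h1α : (0:ℝ) < 1 - α := by linarith
  have htpos : (0:ℝ) < (t:ℝ) + 1 := by positivity
  have hpow : (0:ℝ) < ((t:ℝ) + 1) ^ (-α) := Real.rpow_pos_of_pos htpos _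
  -- each term bounded by 2 * i^(α-2) * (t+1)^(-α)
  have key : ∀ i ∈ Finset.Icc 1 t,
      (1 / (i : ℝ) ^ 2) * (((i : ℝ) + 1) / ((t : ℝ) + 1)) ^ α
        ≤ 2 * (i : ℝ) ^ (α - 2) * ((t : ℝ) + 1) ^ (-α) := by
    intro i hi
    have hi1 : 1 ≤ i := (Finset.mem_Icc.mp hi).1
    have hipos : (0:ℝ) < i := by exact_mod_cast hi1
    have hiR : (1:ℝ) ≤ (i:ℝ) := by exact_mod_cast hi1
    rw [Real.div_rpow (by linarith) (by linarith), Real.rpow_neg (le_of_lt htpos),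
      div_eq_mul_inv]
    have h2 : ((i:ℝ) + 1) ^ α ≤ 2 * (i:ℝ) ^ α := by
      calc ((i:ℝ) + 1) ^ α ≤ (2 * i) ^ α :=
            Real.rpow_le_rpow (by linarith) (by linarith) (le_of_lt hα0)
        _ = 2 ^ α * (i:ℝ) ^ α := by
              rw [Real.mul_rpow (by norm_num) (le_of_lt hipos)]
        _ ≤ 2 * (i:ℝ) ^ α := by
              have : (2:ℝ) ^ α ≤ 2 ^ (1:ℝ) :=
                Real.rpow_le_rpow_of_exponent_le (by norm_num) (le_of_lt hα1)
              have hp : (0:ℝ) ≤ (i:ℝ) ^ α := Real.rpow_nonneg (le_of_lt hipos) _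
              nlinarith [this, Real.rpow_one (2:ℝ)]
    have hsq : (1 / (i:ℝ)^2) * (i:ℝ) ^ α = (i:ℝ) ^ (α - 2) := by
      rw [Real.rpow_sub hipos, one_div, ← Real.rpow_natCast (i:ℝ) 2]
      push_cast
      ring
    calc (1 / (i : ℝ) ^ 2) * (((i:ℝ) + 1) ^ α * (((t:ℝ) + 1) ^ α)⁻¹)
        ≤ (1 / (i : ℝ) ^ 2) * ((2 * (i:ℝ) ^ α) * (((t:ℝ) + 1) ^ α)⁻¹) := by
          have hinv : (0:ℝ) ≤ (((t:ℝ) + 1) ^ α)⁻¹ := by positivity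
          have hsqn : (0:ℝ) ≤ 1 / (i:ℝ)^2 := by positivity
          apply mul_le_mul_of_nonneg_left _ hsqn
          exact mul_le_mul_of_nonneg_right h2 hinv
      _ = 2 * (i : ℝ) ^ (α - 2) * (((t:ℝ) + 1) ^ α)⁻¹ := by
          rw [← hsq]; ring
  calc ∑ i ∈ Finset.Icc 1 t, (1 / (i : ℝ) ^ 2) * (((i : ℝ) + 1) / ((t : ℝ) + 1)) ^ α
      ≤ ∑ i ∈ Finset.Icc 1 t, 2 * (i : ℝ) ^ (α - 2) * ((t : ℝ) + 1) ^ (-α) :=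
        Finset.sum_le_sum key
    _ = (2 * ∑ i ∈ Finset.Icc 1 t, (i : ℝ) ^ (α - 2)) * ((t : ℝ) + 1) ^ (-α) := by
        rw [← Finset.sum_mul, Finset.mul_sum]
    _ ≤ (2 * (1 + 1 / (1 - α))) * ((t : ℝ) + 1) ^ (-α) := by
        gcongr
        exact aux_sum_rpow t ht α hα0 hα1
    _ ≤ 6 / (1 - α) * ((t : ℝ) + 1) ^ (-α) := by
        gcongr
        have hx : (1:ℝ) ≤ 1 / (1 - α) := by
          rw [le_div_iff₀ h1α]; linarith
        have h6 : 6 / (1 - α) = 6 * (1 / (1 - α)) := by ring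
        linarith
end
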